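/- arXiv:1401.7511 — 9 statements merged into one kernel-verified Lean document; each statement's English description precedes it below -/
import Mathlib

section
/- Let G be a connected simple graph with n ≥ 2 vertices. Then √2 · X(G) ≤ GA(G) ≤ √(2(n−1)) · X(G). The lower bound is attained if and only if G is isomorphic to the path P₂ (a single edge), and the upper bound is attained if and only if G is isomorphic to the complete graph Kₙ. -/
open Finset SimpleGraph

variable {V : Type*} [Fintype V] [DecidableEq V]

/-- The sum-connectivity index `X(G) = Σ_{uv ∈ E(G)} 1/√(d_u + d_v)`. -/
noncomputable def sumConnIndex (G : SimpleGraph V) [DecidableRel G.Adj] : ℝ :=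
  ∑ e ∈ G.edgeFinset, Sym2.lift
    ⟨fun u v => 1 / Real.sqrt ((G.degree u : ℝ) + (G.degree v : ℝ)),
     fun u v => by dsimp only; rw [add_comm ((G.degree u : ℝ)) ((G.degree v : ℝ))]⟩ e

/-- The Randić index `R(G) = Σ_{uv ∈ E(G)} 1/√(d_u d_v)`. -/
noncomputable def randicIndex (G : SimpleGraph V) [DecidableRel G.Adj] : ℝ :=
  ∑ e ∈ G.edgeFinset, Sym2.lift
    ⟨fun u v => 1 / Real.sqrt ((G.degree u : ℝ) * (G.degree v : ℝ)),
     fun u v => by dsimp only; rw [mul_comm ((G.degree u : ℝ)) ((G.degree v : ℝ))]⟩ e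

/-- The harmonic index `H(G) = Σ_{uv ∈ E(G)} 2/(d_u + d_v)`. -/
noncomputable def harmonicIndex (G : SimpleGraph V) [DecidableRel G.Adj] : ℝ :=
  ∑ e ∈ G.edgeFinset, Sym2.lift
    ⟨fun u v => 2 / ((G.degree u : ℝ) + (G.degree v : ℝ)),
     fun u v => by dsimp only; rw [add_comm ((G.degree u : ℝ)) ((G.degree v : ℝ))]⟩ e

/-- The atom-bond connectivity index `ABC(G) = Σ_{uv ∈ E(G)} √((d_u + d_v − 2)/(d_u d_v))`. -/
noncomputable def abcIndex (G : SimpleGraph V) [DecidableRel G.Adj] : ℝ :=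
  ∑ e ∈ G.edgeFinset, Sym2.lift
    ⟨fun u v => Real.sqrt (((G.degree u : ℝ) + (G.degree v : ℝ) - 2) /
        ((G.degree u : ℝ) * (G.degree v : ℝ))),
     fun u v => by dsimp only; rw [add_comm ((G.degree u : ℝ)) ((G.degree v : ℝ)),
        mul_comm ((G.degree u : ℝ)) ((G.degree v : ℝ))]⟩ e

/-- The first geometric-arithmetic index `GA(G) = Σ_{uv ∈ E(G)} 2√(d_u d_v)/(d_u + d_v)`. -/
noncomputable def geoArithIndex (G : SimpleGraph V) [DecidableRel G.Adj] : ℝ :=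
  ∑ e ∈ G.edgeFinset, Sym2.lift
    ⟨fun u v => 2 * Real.sqrt ((G.degree u : ℝ) * (G.degree v : ℝ)) /
        ((G.degree u : ℝ) + (G.degree v : ℝ)),
     fun u v => by dsimp only; rw [mul_comm ((G.degree u : ℝ)) ((G.degree v : ℝ)),
        add_comm ((G.degree u : ℝ)) ((G.degree v : ℝ))]⟩ e

/-- The augmented Zagreb index `AZI(G) = Σ_{uv ∈ E(G)} (d_u d_v/(d_u + d_v − 2))³`. -/
noncomputable def augZagrebIndex (G : SimpleGraph V) [DecidableRel G.Adj] : ℝ :=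
  ∑ e ∈ G.edgeFinset, Sym2.lift
    ⟨fun u v => ((G.degree u : ℝ) * (G.degree v : ℝ) /
        ((G.degree u : ℝ) + (G.degree v : ℝ) - 2)) ^ 3,
     fun u v => by dsimp only; rw [mul_comm ((G.degree u : ℝ)) ((G.degree v : ℝ)),
        add_comm ((G.degree u : ℝ)) ((G.degree v : ℝ))]⟩ e

/-- The modified second Zagreb index `M₂*(G) = Σ_{uv ∈ E(G)} 1/(d_u d_v)`. -/
noncomputable def modSecondZagrebIndex (G : SimpleGraph V) [DecidableRel G.Adj] : ℝ :=
  ∑ e ∈ G.edgeFinset, Sym2.lift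
    ⟨fun u v => 1 / ((G.degree u : ℝ) * (G.degree v : ℝ)),
     fun u v => by dsimp only; rw [mul_comm ((G.degree u : ℝ)) ((G.degree v : ℝ))]⟩ e

lemma sqrt_ga_eq (p s : ℝ) (hp : 0 ≤ p) (hs : 0 < s) :
    2 * Real.sqrt p / s = Real.sqrt (4 * p / s ^ 2) := by
  rw [show (4:ℝ) * p = (2 * Real.sqrt p) ^ 2 by
        rw [mul_pow, Real.sq_sqrt hp]; ring,
      Real.sqrt_div (by positivity) (s ^ 2), Real.sqrt_sq hs.le,
      Real.sqrt_sq (by positivity)]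

lemma key_low (a b : ℝ) (ha : 1 ≤ a) (hb : 1 ≤ b) :
    Real.sqrt 2 * (1 / Real.sqrt (a + b)) ≤ 2 * Real.sqrt (a * b) / (a + b) ∧
    (Real.sqrt 2 * (1 / Real.sqrt (a + b)) = 2 * Real.sqrt (a * b) / (a + b) ↔
      a = 1 ∧ b = 1) := by
  have hs : (0:ℝ) < a + b := by linarith
  have hp : (0:ℝ) < a * b := by nlinarith
  have h1 : Real.sqrt 2 * (1 / Real.sqrt (a + b)) = Real.sqrt (2 / (a + b)) := by
    rw [Real.sqrt_div (by norm_num) (a + b), mul_one_div]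
  have h2 := sqrt_ga_eq (a * b) (a + b) hp.le hs
  have hkey : a + b ≤ 2 * (a * b) := by
    nlinarith [mul_nonneg (sub_nonneg.2 ha) (sub_nonneg.2 hb)]
  constructor
  · rw [h1, h2]
    apply Real.sqrt_le_sqrt
    rw [div_le_div_iff₀ hs (by positivity)]
    nlinarith [mul_le_mul_of_nonneg_left hkey hs.le]
  · rw [h1, h2, Real.sqrt_inj (by positivity) (by positivity),
      div_eq_div_iff hs.ne' (by positivity)]
    constructor
    · intro h
      have hsum : a + b = 2 * (a * b) := by
        apply mul_right_cancel₀ hs.ne'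
        linear_combination h / 2
      have hab : a * b ≤ 1 := by
        nlinarith [mul_nonneg (sub_nonneg.2 ha) (sub_nonneg.2 hb)]
      constructor <;> nlinarith
    · rintro ⟨rfl, rfl⟩; norm_num

lemma key_high (a b m : ℝ) (ha1 : 1 ≤ a) (hb1 : 1 ≤ b) (ha : a ≤ m) (hb : b ≤ m) :
    2 * Real.sqrt (a * b) / (a + b) ≤ Real.sqrt (2 * m) * (1 / Real.sqrt (a + b)) ∧
    (2 * Real.sqrt (a * b) / (a + b) = Real.sqrt (2 * m) * (1 / Real.sqrt (a + b)) ↔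
      a = m ∧ b = m) := by
  have hs : (0:ℝ) < a + b := by linarith
  have hp : (0:ℝ) < a * b := by nlinarith
  have hm : (1:ℝ) ≤ m := le_trans ha1 ha
  have h1 : Real.sqrt (2 * m) * (1 / Real.sqrt (a + b)) = Real.sqrt (2 * m / (a + b)) := by
    rw [Real.sqrt_div (by positivity) (a + b), mul_one_div]
  have h2 := sqrt_ga_eq (a * b) (a + b) hp.le hs
  have hkey : 2 * (a * b) ≤ m * (a + b) := by nlinarith
  constructor
  · rw [h1, h2]
    apply Real.sqrt_le_sqrt
    rw [div_le_div_iff₀ (by positivity) hs]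
    nlinarith [mul_le_mul_of_nonneg_left hkey hs.le]
  · rw [h1, h2, Real.sqrt_inj (by positivity) (by positivity),
      div_eq_div_iff (by positivity : (0:ℝ) < (a+b)^2).ne' hs.ne']
    constructor
    · intro h
      have hsum : 2 * (a * b) = m * (a + b) := by
        apply mul_right_cancel₀ hs.ne'
        linear_combination h / 2
      have e : (m - a) * b + (m - b) * a = 0 := by linear_combination -hsum
      have t1 : 0 ≤ (m - a) * b := mul_nonneg (by linarith) (by linarith)
      have t2 : 0 ≤ (m - b) * a := mul_nonneg (by linarith) (by linarith)
      have e1 : (m - a) * b = 0 := by linarith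
      have e2 : (m - b) * a = 0 := by linarith
      constructor
      · rcases mul_eq_zero.1 e1 with h' | h' <;> [linarith; linarith]
      · rcases mul_eq_zero.1 e2 with h' | h' <;> [linarith; linarith]
    · rintro ⟨rfl, rfl⟩; ring

lemma aux_exists_adj {V : Type*} [Fintype V] (G : SimpleGraph V) (hG : G.Connected)
    (h2 : 2 ≤ Fintype.card V) (v : V) : ∃ w, G.Adj v w := by
  have : Nontrivial V := Fintype.one_lt_card_iff_nontrivial.mp h2
  obtain ⟨u, hu⟩ := exists_ne v
  obtain ⟨p⟩ := hG.preconnected v u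
  cases p with
  | nil => exact absurd rfl hu
  | cons h _ => exact ⟨_, h⟩

lemma aux_deg {V : Type*} [Fintype V] [DecidableEq V] (G : SimpleGraph V) [DecidableRel G.Adj]
    (h : ∀ x y : V, G.Adj x y ↔ x ≠ y) (v : V) : G.degree v = Fintype.card V - 1 := by
  have hnb : G.neighborFinset v = Finset.univ.erase v := by
    ext w
    simp only [SimpleGraph.mem_neighborFinset, Finset.mem_erase, Finset.mem_univ, and_true, h]
    exact ne_comm
  rw [← SimpleGraph.card_neighborFinset_eq_degree, hnb,
    Finset.card_erase_of_mem (Finset.mem_univ v), Finset.card_univ]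

variable (G : SimpleGraph V) [DecidableRel G.Adj]

theorem stmt0 (hG : G.Connected) (n : ℕ) (hn : Fintype.card V = n) (hn2 : 2 ≤ n) :
    Real.sqrt 2 * sumConnIndex G ≤ geoArithIndex G ∧
    geoArithIndex G ≤ Real.sqrt (2 * ((n : ℝ) - 1)) * sumConnIndex G ∧
    (Real.sqrt 2 * sumConnIndex G = geoArithIndex G ↔ Nonempty (G ≃g pathGraph 2)) ∧
    (geoArithIndex G = Real.sqrt (2 * ((n : ℝ) - 1)) * sumConnIndex G ↔
      Nonempty (G ≃g completeGraph (Fin n))) := by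
  classical
  have hcard : 2 ≤ Fintype.card V := hn ▸ hn2
  have hADJ : ∀ u v : V, s(u, v) ∈ G.edgeFinset → G.Adj u v := by
    intro u v h
    simpa [SimpleGraph.mem_edgeFinset] using h
  have hdeg1 : ∀ {u v : V}, G.Adj u v → 1 ≤ (G.degree u : ℝ) := by
    intro u v h
    have : 0 < G.degree u := (G.degree_pos_iff_exists_adj u).mpr ⟨v, h⟩
    exact_mod_cast this
  have hm1 : ((n - 1 : ℕ) : ℝ) = (n : ℝ) - 1 := by
    have h1 : 1 ≤ n := by omega
    push_cast [h1]
    ring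
  have hdegn : ∀ v : V, (G.degree v : ℝ) ≤ (n : ℝ) - 1 := by
    intro v
    have h := G.degree_lt_card_verts v
    rw [hn] at h
    rw [← hm1]
    exact_mod_cast Nat.le_sub_one_of_lt h
  -- per-edge inequalities
  have hle1 : ∀ e ∈ G.edgeFinset, Real.sqrt 2 * Sym2.lift
      ⟨fun u v => 1 / Real.sqrt ((G.degree u : ℝ) + (G.degree v : ℝ)),
       fun u v => by dsimp only; rw [add_comm ((G.degree u : ℝ)) ((G.degree v : ℝ))]⟩ e ≤
      Sym2.lift ⟨fun u v => 2 * Real.sqrt ((G.degree u : ℝ) * (G.degree v : ℝ)) /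
        ((G.degree u : ℝ) + (G.degree v : ℝ)),
       fun u v => by dsimp only; rw [mul_comm ((G.degree u : ℝ)) ((G.degree v : ℝ)),
          add_comm ((G.degree u : ℝ)) ((G.degree v : ℝ))]⟩ e := by
    intro e he
    induction e using Sym2.ind with
    | _ u v =>
      have hadj := hADJ u v he
      simp only [Sym2.lift_mk]
      exact (key_low _ _ (hdeg1 hadj) (hdeg1 hadj.symm)).1
  have hle2 : ∀ e ∈ G.edgeFinset, Sym2.lift
      ⟨fun u v => 2 * Real.sqrt ((G.degree u : ℝ) * (G.degree v : ℝ)) /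
        ((G.degree u : ℝ) + (G.degree v : ℝ)),
       fun u v => by dsimp only; rw [mul_comm ((G.degree u : ℝ)) ((G.degree v : ℝ)),
          add_comm ((G.degree u : ℝ)) ((G.degree v : ℝ))]⟩ e ≤
      Real.sqrt (2 * ((n : ℝ) - 1)) * Sym2.lift
      ⟨fun u v => 1 / Real.sqrt ((G.degree u : ℝ) + (G.degree v : ℝ)),
       fun u v => by dsimp only; rw [add_comm ((G.degree u : ℝ)) ((G.degree v : ℝ))]⟩ e := by
    intro e he
    induction e using Sym2.ind with
    | _ u v =>
      have hadj := hADJ u v he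
      simp only [Sym2.lift_mk]
      exact (key_high _ _ _ (hdeg1 hadj) (hdeg1 hadj.symm) (hdegn u) (hdegn v)).1
  -- equality conditions
  have hEQ1 : (Real.sqrt 2 * sumConnIndex G = geoArithIndex G) ↔
      ∀ u v : V, G.Adj u v → G.degree u = 1 ∧ G.degree v = 1 := by
    rw [sumConnIndex, geoArithIndex, Finset.mul_sum,
      Finset.sum_eq_sum_iff_of_le hle1]
    constructor
    · intro h u v huv
      have h' := h s(u, v) (by simp [SimpleGraph.mem_edgeFinset, huv])
      simp only [Sym2.lift_mk] at h'
      have h2 := (key_low _ _ (hdeg1 huv) (hdeg1 huv.symm)).2.mp h'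
      exact_mod_cast h2
    · intro h e he
      induction e using Sym2.ind with
      | _ u v =>
        have huv := hADJ u v he
        simp only [Sym2.lift_mk]
        refine (key_low _ _ (hdeg1 huv) (hdeg1 huv.symm)).2.mpr ?_
        exact_mod_cast h u v huv
  have hEQ2 : (geoArithIndex G = Real.sqrt (2 * ((n : ℝ) - 1)) * sumConnIndex G) ↔
      ∀ u v : V, G.Adj u v → G.degree u = n - 1 ∧ G.degree v = n - 1 := by
    rw [sumConnIndex, geoArithIndex, Finset.mul_sum,
      Finset.sum_eq_sum_iff_of_le hle2]
    constructor
    · intro h u v huv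
      have h' := h s(u, v) (by simp [SimpleGraph.mem_edgeFinset, huv])
      simp only [Sym2.lift_mk] at h'
      have h2 := (key_high _ _ _ (hdeg1 huv) (hdeg1 huv.symm) (hdegn u) (hdegn v)).2.mp h'
      rw [← hm1] at h2
      exact_mod_cast h2
    · intro h e he
      induction e using Sym2.ind with
      | _ u v =>
        have huv := hADJ u v he
        simp only [Sym2.lift_mk]
        refine (key_high _ _ _ (hdeg1 huv) (hdeg1 huv.symm) (hdegn u) (hdegn v)).2.mpr ?_
        rw [← hm1]
        exact_mod_cast h u v huv
  -- characterization 1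
  have hC1 : (∀ u v : V, G.Adj u v → G.degree u = 1 ∧ G.degree v = 1) ↔
      Nonempty (G ≃g pathGraph 2) := by
    constructor
    · intro h
      have hnt : Nontrivial V := Fintype.one_lt_card_iff_nontrivial.mp hcard
      obtain ⟨a, b, hab⟩ : ∃ a b : V, G.Adj a b := by
        obtain ⟨w, hw⟩ := aux_exists_adj G hG hcard (Classical.arbitrary V)
        exact ⟨_, _, hw⟩
      have hda := (h a b hab).1
      have hdb := (h a b hab).2
      have huniq : ∀ x y z : V, G.degree x = 1 → G.Adj x y → G.Adj x z → y = z := by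
        intro x y z hdx hxy hxz
        have hy : y ∈ G.neighborFinset x := (SimpleGraph.mem_neighborFinset G x y).mpr hxy
        have hz : z ∈ G.neighborFinset x := (SimpleGraph.mem_neighborFinset G x z).mpr hxz
        have hc : (G.neighborFinset x).card ≤ 1 := by
          rw [SimpleGraph.card_neighborFinset_eq_degree, hdx]
        exact Finset.card_le_one.mp hc y hy z hz
      have hclosed : ∀ {x y : V} (p : G.Walk x y), (x = a ∨ x = b) → (y = a ∨ y = b) := by
        intro x y p
        induction p with
        | nil => exact id
        | cons hadj p ih =>
          intro hx
          apply ih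
          rcases hx with rfl | rfl
          · right; exact huniq _ _ _ hda hadj hab
          · left; exact huniq _ _ _ hdb hadj hab.symm
      have hall : ∀ x : V, x = a ∨ x = b := by
        intro x
        obtain ⟨p⟩ := hG.preconnected a x
        exact hclosed p (Or.inl rfl)
      have hadj_iff : ∀ x y : V, G.Adj x y ↔ x ≠ y := by
        intro x y
        constructor
        · exact fun h' => h'.ne
        · intro hxy
          rcases hall x with rfl | rfl <;> rcases hall y with rfl | rfl
          · exact absurd rfl hxy
          · exact hab
          · exact hab.symm
          · exact absurd rfl hxy
      have hcard2 : Fintype.card V = 2 := by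
        have huniv : (Finset.univ : Finset V) = {a, b} := by
          ext x; simpa using hall x
        rw [← Finset.card_univ, huniv,
          Finset.card_insert_of_notMem (by simpa using hab.ne), Finset.card_singleton]
      exact ⟨⟨Fintype.equivFinOfCardEq hcard2, by
        intro x y
        simp [pathGraph_two_eq_top, hadj_iff x y]⟩⟩
    · rintro ⟨f⟩
      have hadj_iff : ∀ x y : V, G.Adj x y ↔ x ≠ y := by
        intro x y
        constructor
        · exact fun h' => h'.ne
        · intro hxy
          have htop : ∀ i j : Fin 2, (pathGraph 2).Adj i j ↔ i ≠ j := by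
            intro i j
            rw [pathGraph_two_eq_top]
            simp
          rw [← f.map_adj_iff, htop]
          exact fun h' => hxy (f.toEquiv.injective h')
      have hcV : Fintype.card V = 2 := by
        have := Fintype.card_congr f.toEquiv
        simpa using this
      have hdeg : ∀ v : V, G.degree v = 1 := by
        intro v
        rw [aux_deg G hadj_iff v, hcV]
      exact fun u v _ => ⟨hdeg u, hdeg v⟩
  -- characterization 2
  have hC2 : (∀ u v : V, G.Adj u v → G.degree u = n - 1 ∧ G.degree v = n - 1) ↔
      Nonempty (G ≃g completeGraph (Fin n)) := by
    constructor
    · intro h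
      have hdegall : ∀ v : V, G.degree v = n - 1 := by
        intro v
        obtain ⟨w, hw⟩ := aux_exists_adj G hG hcard v
        exact (h v w hw).1
      have hadj_iff : ∀ x y : V, G.Adj x y ↔ x ≠ y := by
        intro x y
        constructor
        · exact fun h' => h'.ne
        · intro hxy
          have hsub : G.neighborFinset x ⊆ Finset.univ.erase x := by
            intro w hw
            exact Finset.mem_erase.mpr
              ⟨((SimpleGraph.mem_neighborFinset G x w).mp hw).ne', Finset.mem_univ w⟩
          have heq : G.neighborFinset x = Finset.univ.erase x := by
            apply Finset.eq_of_subset_of_card_le hsub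
            rw [Finset.card_erase_of_mem (Finset.mem_univ x), Finset.card_univ, hn,
              SimpleGraph.card_neighborFinset_eq_degree, hdegall]
          have hy : y ∈ G.neighborFinset x := by
            rw [heq]
            exact Finset.mem_erase.mpr ⟨Ne.symm hxy, Finset.mem_univ y⟩
          exact (SimpleGraph.mem_neighborFinset G x y).mp hy
      exact ⟨⟨Fintype.equivFinOfCardEq hn, by
        intro x y
        simp [completeGraph, hadj_iff x y]⟩⟩
    · rintro ⟨f⟩
      have hadj_iff : ∀ x y : V, G.Adj x y ↔ x ≠ y := by
        intro x y
        constructor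
        · exact fun h' => h'.ne
        · intro hxy
          rw [← f.map_adj_iff]
          simp only [completeGraph, SimpleGraph.top_adj, ne_eq]
          exact fun h' => hxy (f.toEquiv.injective h')
      have hdeg : ∀ v : V, G.degree v = n - 1 := by
        intro v
        rw [aux_deg G hadj_iff v, hn]
      exact fun u v _ => ⟨hdeg u, hdeg v⟩
  refine ⟨?_, ?_, hEQ1.trans hC1, hEQ2.trans hC2⟩
  · rw [sumConnIndex, geoArithIndex, Finset.mul_sum]
    exact Finset.sum_le_sum hle1
  · rw [sumConnIndex, geoArithIndex, Finset.mul_sum]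
    exact Finset.sum_le_sum hle2
end

section
/- Let G be a connected simple graph with minimum degree δ ≥ 2. Then √(2δ) · X(G) ≤ GA(G), with equality if and only if G is a δ-regular graph. -/
open Finset SimpleGraph

variable {V : Type*} [Fintype V] [DecidableEq V]

variable (G : SimpleGraph V) [DecidableRel G.Adj]


private lemma key_ineq (d a b : ℝ) (hd : 0 < d) (ha : d ≤ a) (hb : d ≤ b) :
    Real.sqrt (2 * d) * (1 / Real.sqrt (a + b)) ≤ 2 * Real.sqrt (a * b) / (a + b) ∧
    (Real.sqrt (2 * d) * (1 / Real.sqrt (a + b)) = 2 * Real.sqrt (a * b) / (a + b) ↔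
      a = d ∧ b = d) := by
  have ha0 : 0 < a := lt_of_lt_of_le hd ha
  have hb0 : 0 < b := lt_of_lt_of_le hd hb
  have hab : 0 < a + b := by linarith
  have h4 : Real.sqrt 4 = 2 := by
    rw [show (4:ℝ) = 2 ^ 2 by norm_num, Real.sqrt_sq (by norm_num)]
  have hL : Real.sqrt (2 * d) * (1 / Real.sqrt (a + b)) = Real.sqrt (2 * d / (a + b)) := by
    rw [Real.sqrt_div (by positivity)]; ring
  have hR : 2 * Real.sqrt (a * b) / (a + b) = Real.sqrt (4 * (a * b) / (a + b) ^ 2) := by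
    rw [Real.sqrt_div (by positivity), Real.sqrt_mul (by norm_num : (0:ℝ) ≤ 4), h4,
      Real.sqrt_sq hab.le]
  rw [hL, hR]
  constructor
  · apply Real.sqrt_le_sqrt
    rw [div_le_div_iff₀ hab (by positivity)]
    nlinarith [mul_nonneg (mul_nonneg ha0.le (sub_nonneg.mpr hb)) hab.le,
      mul_nonneg (mul_nonneg hb0.le (sub_nonneg.mpr ha)) hab.le]
  · rw [Real.sqrt_inj (by positivity) (by positivity), div_eq_div_iff hab.ne' (by positivity : (0:ℝ) < (a+b)^2).ne']
    constructor
    · intro h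
      have h1 : a * (b - d) + b * (a - d) = 0 := by nlinarith
      have h2 : a * (b - d) = 0 := by
        nlinarith [mul_nonneg ha0.le (sub_nonneg.mpr hb), mul_nonneg hb0.le (sub_nonneg.mpr ha)]
      have h3 : b * (a - d) = 0 := by linarith
      constructor
      · rcases mul_eq_zero.mp h3 with h | h; · linarith
        linarith
      · rcases mul_eq_zero.mp h2 with h | h; · linarith
        linarith
    · rintro ⟨rfl, rfl⟩; ring

theorem stmt1 (hG : G.Connected) (hδ : 2 ≤ G.minDegree) :
    Real.sqrt (2 * (G.minDegree : ℝ)) * sumConnIndex G ≤ geoArithIndex G ∧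
    (Real.sqrt (2 * (G.minDegree : ℝ)) * sumConnIndex G = geoArithIndex G ↔
      G.IsRegularOfDegree G.minDegree) := by
  classical
  have hne : Nonempty V := hG.nonempty
  set d : ℕ := G.minDegree with hdd
  have hd0 : (0:ℝ) < d := by
    have : (2:ℝ) ≤ d := by exact_mod_cast hδ
    linarith
  have hle : ∀ e ∈ G.edgeFinset,
      Real.sqrt (2 * (d : ℝ)) * Sym2.lift
        ⟨fun u v => 1 / Real.sqrt ((G.degree u : ℝ) + (G.degree v : ℝ)),
         fun u v => by dsimp only; rw [add_comm ((G.degree u : ℝ)) ((G.degree v : ℝ))]⟩ e ≤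
      Sym2.lift
        ⟨fun u v => 2 * Real.sqrt ((G.degree u : ℝ) * (G.degree v : ℝ)) /
            ((G.degree u : ℝ) + (G.degree v : ℝ)),
         fun u v => by dsimp only; rw [mul_comm ((G.degree u : ℝ)) ((G.degree v : ℝ)),
            add_comm ((G.degree u : ℝ)) ((G.degree v : ℝ))]⟩ e := by
    intro e he
    induction e with
    | h u v =>
      simp only [Sym2.lift_mk]
      exact (key_ineq (d:ℝ) _ _ hd0 (by exact_mod_cast G.minDegree_le_degree u)
        (by exact_mod_cast G.minDegree_le_degree v)).1
  have hsum : Real.sqrt (2 * (d : ℝ)) * sumConnIndex G =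
      ∑ e ∈ G.edgeFinset, Real.sqrt (2 * (d : ℝ)) * Sym2.lift
        ⟨fun u v => 1 / Real.sqrt ((G.degree u : ℝ) + (G.degree v : ℝ)),
         fun u v => by dsimp only; rw [add_comm ((G.degree u : ℝ)) ((G.degree v : ℝ))]⟩ e := by
    rw [sumConnIndex, Finset.mul_sum]
  constructor
  · rw [hsum]
    exact Finset.sum_le_sum hle
  · constructor
    · intro h
      rw [hsum] at h
      have heq := (Finset.sum_eq_sum_iff_of_le hle).1 h
      intro u
      have hdeg : 0 < G.degree u := lt_of_lt_of_le (by omega) (G.minDegree_le_degree u)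
      obtain ⟨v, hadj⟩ := G.degree_pos_iff_exists_adj u |>.1 hdeg
      have he : s(u, v) ∈ G.edgeFinset := mem_edgeFinset.mpr hadj
      have := heq _ he
      simp only [Sym2.lift_mk] at this
      have hkey := ((key_ineq (d:ℝ) _ _ hd0 (by exact_mod_cast G.minDegree_le_degree u)
        (by exact_mod_cast G.minDegree_le_degree v)).2).1 this
      exact_mod_cast hkey.1
    · intro hreg
      rw [hsum, geoArithIndex]
      apply Finset.sum_congr rfl
      intro e he
      induction e with
      | h u v =>
        simp only [Sym2.lift_mk, hreg u, hreg v]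
        rw [show ((d:ℝ) * d) = (d:ℝ)^2 by ring, Real.sqrt_sq hd0.le]
        rw [show Real.sqrt (2 * (d:ℝ)) * (1 / Real.sqrt ((d:ℝ) + d)) =
          Real.sqrt (2 * d) / Real.sqrt (2 * d) by rw [two_mul]; ring]
        rw [div_self (by positivity)]
        field_simp
        ring
end

section
/- Let G be a connected simple graph with n ≥ 2 vertices. Then R(G) ≤ GA(G) ≤ (n−1) · R(G). The lower bound is attained if and only if G is isomorphic to the path P₂ (a single edge), and the upper bound is attained if and only if G is isomorphic to the complete graph Kₙ. -/
set_option linter.unusedSectionVars false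
set_option maxHeartbeats 1000000

open Finset SimpleGraph

section Aux

lemma aux_le1 {a b : ℝ} (ha : 1 ≤ a) (hb : 1 ≤ b) :
    1 / Real.sqrt (a * b) ≤ 2 * Real.sqrt (a * b) / (a + b) := by
  have hs : 0 < Real.sqrt (a * b) := Real.sqrt_pos.mpr (by nlinarith)
  have hsq : Real.sqrt (a * b) * Real.sqrt (a * b) = a * b :=
    Real.mul_self_sqrt (by nlinarith)
  rw [div_le_div_iff₀ hs (by linarith)]
  nlinarith [mul_nonneg (sub_nonneg.2 ha) (sub_nonneg.2 hb)]

lemma aux_eq1 {a b : ℝ} (ha : 1 ≤ a) (hb : 1 ≤ b)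
    (heq : 1 / Real.sqrt (a * b) = 2 * Real.sqrt (a * b) / (a + b)) : a = 1 ∧ b = 1 := by
  have hs : 0 < Real.sqrt (a * b) := Real.sqrt_pos.mpr (by nlinarith)
  have hsq : Real.sqrt (a * b) * Real.sqrt (a * b) = a * b :=
    Real.mul_self_sqrt (by nlinarith)
  rw [div_eq_div_iff hs.ne' (by positivity)] at heq
  constructor <;>
    nlinarith [mul_nonneg (sub_nonneg.2 ha) (sub_nonneg.2 hb),
      mul_nonneg (by linarith : (0:ℝ) ≤ a) (sub_nonneg.2 hb),
      mul_nonneg (by linarith : (0:ℝ) ≤ b) (sub_nonneg.2 ha)]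

lemma aux_le2 {a b c : ℝ} (ha : 1 ≤ a) (hb : 1 ≤ b) (hac : a ≤ c) (hbc : b ≤ c) :
    2 * Real.sqrt (a * b) / (a + b) ≤ c * (1 / Real.sqrt (a * b)) := by
  have hs : 0 < Real.sqrt (a * b) := Real.sqrt_pos.mpr (by nlinarith)
  have hsq : Real.sqrt (a * b) * Real.sqrt (a * b) = a * b :=
    Real.mul_self_sqrt (by nlinarith)
  rw [mul_one_div, div_le_div_iff₀ (by linarith) hs]
  nlinarith [mul_nonneg (by linarith : (0:ℝ) ≤ a) (sub_nonneg.2 hbc),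
    mul_nonneg (by linarith : (0:ℝ) ≤ b) (sub_nonneg.2 hac)]

lemma aux_eq2 {a b c : ℝ} (ha : 1 ≤ a) (hb : 1 ≤ b) (hac : a ≤ c) (hbc : b ≤ c)
    (heq : 2 * Real.sqrt (a * b) / (a + b) = c * (1 / Real.sqrt (a * b))) :
    a = c ∧ b = c := by
  have hs : 0 < Real.sqrt (a * b) := Real.sqrt_pos.mpr (by nlinarith)
  have hsq : Real.sqrt (a * b) * Real.sqrt (a * b) = a * b :=
    Real.mul_self_sqrt (by nlinarith)
  rw [mul_one_div, div_eq_div_iff (by positivity) hs.ne'] at heq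
  constructor <;>
    nlinarith [mul_nonneg (by linarith : (0:ℝ) ≤ a) (sub_nonneg.2 hbc),
      mul_nonneg (by linarith : (0:ℝ) ≤ b) (sub_nonneg.2 hac)]

end Aux

section GraphAux

variable {V : Type*} [Fintype V] [DecidableEq V]
variable (G : SimpleGraph V) [DecidableRel G.Adj]

lemma aux_edge_adj {u v : V} (he : s(u,v) ∈ G.edgeFinset) : G.Adj u v := by
  rwa [mem_edgeFinset, mem_edgeSet] at he

lemma aux_deg_ge_one {u v : V} (h : G.Adj u v) : 1 ≤ (G.degree u : ℝ) := by
  have : 0 < G.degree u := G.degree_pos_iff_exists_adj u |>.mpr ⟨v, h⟩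
  exact_mod_cast this

lemma aux_deg_le {n : ℕ} (hn : Fintype.card V = n) (u : V) :
    (G.degree u : ℝ) ≤ (n : ℝ) - 1 := by
  have h := G.degree_lt_card_verts u
  rw [hn] at h
  have : (G.degree u : ℝ) + 1 ≤ (n : ℝ) := by exact_mod_cast h
  linarith

/-- All degrees from complete adjacency. -/
lemma aux_deg_of_top (hAdj : ∀ a b : V, G.Adj a b ↔ a ≠ b) (v : V) :
    G.degree v = Fintype.card V - 1 := by
  have h : G.neighborFinset v = Finset.univ.erase v := by
    ext w
    simp [mem_neighborFinset, hAdj, ne_comm]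
  rw [← card_neighborFinset_eq_degree, h, Finset.card_erase_of_mem (Finset.mem_univ v),
    Finset.card_univ]

/-- Every vertex has a neighbor. -/
lemma aux_exists_neighbor (hG : G.Connected) (hcard : 1 < Fintype.card V) (v : V) :
    ∃ w, G.Adj v w := by
  obtain ⟨u, hu⟩ := Fintype.exists_ne_of_one_lt_card hcard v
  obtain ⟨p⟩ := hG.preconnected v u
  cases p with
  | nil => exact absurd rfl hu.symm
  | cons h _ => exact ⟨_, h⟩

/-- From a degree-1 edge and connectivity, the adjacency is complete and |V| = 2. -/
lemma aux_path_case (hG : G.Connected) (hcard : 1 < Fintype.card V)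
    (hdeg : ∀ u v : V, G.Adj u v → G.degree u = 1) :
    (∀ a b : V, G.Adj a b ↔ a ≠ b) ∧ Fintype.card V = 2 := by
  obtain ⟨u, -, -⟩ := Fintype.exists_pair_of_one_lt_card hcard
  obtain ⟨x, hux⟩ := aux_exists_neighbor G hG hcard u
  have hnb : ∀ y z : V, G.Adj y z → G.neighborFinset y = {z} := by
    intro y z h
    have h1 : G.degree y = 1 := hdeg y z h
    rw [← card_neighborFinset_eq_degree] at h1
    obtain ⟨a, ha⟩ := Finset.card_eq_one.mp h1
    have hz : z ∈ G.neighborFinset y := (mem_neighborFinset G y z).mpr h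
    rw [ha] at hz ⊢
    rw [Finset.mem_singleton] at hz
    rw [hz]
  have hnu : ∀ y : V, G.Adj u y → y = x := by
    intro y h
    have := (mem_neighborFinset G u y).mpr h
    rw [hnb u x hux, Finset.mem_singleton] at this
    exact this
  have hnx : ∀ y : V, G.Adj x y → y = u := by
    intro y h
    have := (mem_neighborFinset G x y).mpr h
    rw [hnb x u hux.symm, Finset.mem_singleton] at this
    exact this
  have key : ∀ (y z : V), G.Walk y z → (y = u ∨ y = x) → (z = u ∨ z = x) := by
    intro y z p
    induction p with
    | nil => exact id
    | cons h _ ih =>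
      rintro (rfl | rfl)
      · exact ih (Or.inr (hnu _ h))
      · exact ih (Or.inl (hnx _ h))
  have huniv : ∀ w : V, w = u ∨ w = x := fun w =>
    key u w (hG.preconnected u w).some (Or.inl rfl)
  have hne := hux.ne
  constructor
  · intro a b
    constructor
    · exact fun h => h.ne
    · intro hab
      rcases huniv a with rfl | rfl <;> rcases huniv b with rfl | rfl
      · exact absurd rfl hab
      · exact hux
      · exact hux.symm
      · exact absurd rfl hab
  · have : (Finset.univ : Finset V) = {u, x} := by
      ext w
      simp only [Finset.mem_univ, true_iff, Finset.mem_insert, Finset.mem_singleton]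
      exact huniv w
    rw [← Finset.card_univ, this, Finset.card_insert_of_notMem (by simpa using hne),
      Finset.card_singleton]

/-- From degree-(n-1) edges and connectivity, the adjacency is complete. -/
lemma aux_complete_case {n : ℕ} (hG : G.Connected) (hn : Fintype.card V = n) (hn2 : 2 ≤ n)
    (hdeg : ∀ u v : V, G.Adj u v → G.degree u = n - 1) :
    ∀ a b : V, G.Adj a b ↔ a ≠ b := by
  have hcard : 1 < Fintype.card V := by omega
  have hall : ∀ v : V, G.degree v = n - 1 := by
    intro v
    obtain ⟨w, hw⟩ := aux_exists_neighbor G hG hcard v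
    exact hdeg v w hw
  intro a b
  constructor
  · exact fun h => h.ne
  · intro hab
    have hsub : G.neighborFinset a ⊆ Finset.univ.erase a := by
      intro w hw
      rw [mem_neighborFinset] at hw
      exact Finset.mem_erase.mpr ⟨hw.ne', Finset.mem_univ w⟩
    have hcards : (Finset.univ.erase a).card ≤ (G.neighborFinset a).card := by
      rw [Finset.card_erase_of_mem (Finset.mem_univ a), Finset.card_univ, hn,
        card_neighborFinset_eq_degree, hall a]
    have heq := Finset.eq_of_subset_of_card_le hsub hcards
    have hb : b ∈ Finset.univ.erase a := Finset.mem_erase.mpr ⟨Ne.symm hab, Finset.mem_univ b⟩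
    rw [← heq, mem_neighborFinset] at hb
    exact hb

/-- Build an iso to the complete graph on `Fin n`. -/
noncomputable def auxIsoComplete (hAdj : ∀ a b : V, G.Adj a b ↔ a ≠ b) {n : ℕ}
    (hn : Fintype.card V = n) : G ≃g completeGraph (Fin n) where
  toEquiv := Fintype.equivFinOfCardEq hn
  map_rel_iff' := by
    intro a b
    simp only [completeGraph, top_adj, ne_eq, EmbeddingLike.apply_eq_iff_eq, hAdj]

/-- Transport: iso to complete graph gives complete adjacency. -/
lemma aux_adj_of_isoComplete {n : ℕ} (f : G ≃g completeGraph (Fin n)) :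
    ∀ a b : V, G.Adj a b ↔ a ≠ b := by
  intro a b
  rw [← f.map_rel_iff]
  simp [completeGraph, top_adj, f.toEquiv.injective.ne_iff]

end GraphAux

variable {V : Type*} [Fintype V] [DecidableEq V]

variable (G : SimpleGraph V) [DecidableRel G.Adj]



lemma aux_termwise_le1 : ∀ e ∈ G.edgeFinset,
    Sym2.lift ⟨fun u v => 1 / Real.sqrt ((G.degree u : ℝ) * (G.degree v : ℝ)),
     fun u v => by dsimp only; rw [mul_comm ((G.degree u : ℝ)) ((G.degree v : ℝ))]⟩ e ≤
    Sym2.lift ⟨fun u v => 2 * Real.sqrt ((G.degree u : ℝ) * (G.degree v : ℝ)) /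
        ((G.degree u : ℝ) + (G.degree v : ℝ)),
     fun u v => by dsimp only; rw [mul_comm ((G.degree u : ℝ)) ((G.degree v : ℝ)),
        add_comm ((G.degree u : ℝ)) ((G.degree v : ℝ))]⟩ e := by
  intro e he
  induction e with
  | _ u v =>
    have hadj := aux_edge_adj G he
    simp only [Sym2.lift_mk]
    exact aux_le1 (aux_deg_ge_one G hadj) (aux_deg_ge_one G hadj.symm)

lemma aux_termwise_le2 {n : ℕ} (hn : Fintype.card V = n) : ∀ e ∈ G.edgeFinset,
    Sym2.lift ⟨fun u v => 2 * Real.sqrt ((G.degree u : ℝ) * (G.degree v : ℝ)) /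
        ((G.degree u : ℝ) + (G.degree v : ℝ)),
     fun u v => by dsimp only; rw [mul_comm ((G.degree u : ℝ)) ((G.degree v : ℝ)),
        add_comm ((G.degree u : ℝ)) ((G.degree v : ℝ))]⟩ e ≤
    ((n : ℝ) - 1) *
    Sym2.lift ⟨fun u v => 1 / Real.sqrt ((G.degree u : ℝ) * (G.degree v : ℝ)),
     fun u v => by dsimp only; rw [mul_comm ((G.degree u : ℝ)) ((G.degree v : ℝ))]⟩ e := by
  intro e he
  induction e with
  | _ u v =>
    have hadj := aux_edge_adj G he
    simp only [Sym2.lift_mk]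
    exact aux_le2 (aux_deg_ge_one G hadj) (aux_deg_ge_one G hadj.symm)
      (aux_deg_le G hn u) (aux_deg_le G hn v)

lemma aux_R_le_GA : randicIndex G ≤ geoArithIndex G :=
  Finset.sum_le_sum (aux_termwise_le1 G)

lemma aux_GA_le {n : ℕ} (hn : Fintype.card V = n) :
    geoArithIndex G ≤ ((n : ℝ) - 1) * randicIndex G := by
  rw [randicIndex, Finset.mul_sum]
  exact Finset.sum_le_sum (aux_termwise_le2 G hn)

lemma aux_R_eq_GA_iff :
    randicIndex G = geoArithIndex G ↔ ∀ u v : V, G.Adj u v → G.degree u = 1 := by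
  rw [randicIndex, geoArithIndex, Finset.sum_eq_sum_iff_of_le (aux_termwise_le1 G)]
  constructor
  · intro h u v huv
    have he : s(u,v) ∈ G.edgeFinset := by rwa [mem_edgeFinset, mem_edgeSet]
    have h2 := h _ he
    simp only [Sym2.lift_mk] at h2
    have h3 := (aux_eq1 (aux_deg_ge_one G huv) (aux_deg_ge_one G huv.symm) h2).1
    exact_mod_cast h3
  · intro h e he
    induction e with
    | _ u v =>
      have hadj := aux_edge_adj G he
      simp only [Sym2.lift_mk, h u v hadj, h v u hadj.symm]
      norm_num

lemma aux_GA_eq_iff {n : ℕ} (hn : Fintype.card V = n) (hn2 : 2 ≤ n) :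
    geoArithIndex G = ((n : ℝ) - 1) * randicIndex G ↔
      ∀ u v : V, G.Adj u v → G.degree u = n - 1 := by
  rw [randicIndex, geoArithIndex, Finset.mul_sum,
    Finset.sum_eq_sum_iff_of_le (aux_termwise_le2 G hn)]
  have hcast : ((n - 1 : ℕ) : ℝ) = (n : ℝ) - 1 := by
    have : 1 ≤ n := by omega
    push_cast [this]
    ring
  constructor
  · intro h u v huv
    have he : s(u,v) ∈ G.edgeFinset := by rwa [mem_edgeFinset, mem_edgeSet]
    have h2 := h _ he
    simp only [Sym2.lift_mk] at h2
    have h3 := (aux_eq2 (aux_deg_ge_one G huv) (aux_deg_ge_one G huv.symm)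
      (aux_deg_le G hn u) (aux_deg_le G hn v) h2).1
    have : (G.degree u : ℝ) = ((n - 1 : ℕ) : ℝ) := by rw [hcast]; exact h3
    exact_mod_cast this
  · intro h e he
    induction e with
    | _ u v =>
      have hadj := aux_edge_adj G he
      have hc : (0:ℝ) < (n : ℝ) - 1 := by
        have : (2:ℝ) ≤ (n:ℝ) := by exact_mod_cast hn2
        linarith
      simp only [Sym2.lift_mk, h u v hadj, h v u hadj.symm, hcast]
      rw [Real.sqrt_mul_self (by linarith)]
      field_simp
      ring

theorem stmt2 (hG : G.Connected) (n : ℕ) (hn : Fintype.card V = n) (hn2 : 2 ≤ n) :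
    randicIndex G ≤ geoArithIndex G ∧
    geoArithIndex G ≤ ((n : ℝ) - 1) * randicIndex G ∧
    (randicIndex G = geoArithIndex G ↔ Nonempty (G ≃g pathGraph 2)) ∧
    (geoArithIndex G = ((n : ℝ) - 1) * randicIndex G ↔
      Nonempty (G ≃g completeGraph (Fin n))) := by
  have hcard : 1 < Fintype.card V := by omega
  refine ⟨aux_R_le_GA G, aux_GA_le G hn, ?_, ?_⟩
  · rw [aux_R_eq_GA_iff G]
    constructor
    · intro h
      obtain ⟨hAdj, hc2⟩ := aux_path_case G hG hcard h
      have f := auxIsoComplete G hAdj hc2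
      rw [pathGraph_two_eq_top]
      exact ⟨f⟩
    · rintro ⟨f⟩
      have e2 : pathGraph 2 = completeGraph (Fin 2) := pathGraph_two_eq_top
      have f' : G ≃g completeGraph (Fin 2) := e2 ▸ f
      have hAdj := aux_adj_of_isoComplete G f'
      have hc2 : Fintype.card V = 2 := by
        rw [Fintype.card_congr f.toEquiv, Fintype.card_fin]
      intro u v huv
      rw [aux_deg_of_top G hAdj u, hc2]
  · rw [aux_GA_eq_iff G hn hn2]
    constructor
    · intro h
      exact ⟨auxIsoComplete G (aux_complete_case G hG hn hn2 h) hn⟩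
    · rintro ⟨f⟩
      have hAdj := aux_adj_of_isoComplete G f
      intro u v huv
      rw [aux_deg_of_top G hAdj u, hn]
end

section
/- Let G be a connected simple graph with minimum degree δ ≥ 2. Then δ · H(G) ≤ GA(G), with equality if and only if G is a δ-regular graph. -/
open Finset SimpleGraph

variable {V : Type*} [Fintype V] [DecidableEq V]

variable (G : SimpleGraph V) [DecidableRel G.Adj]

private lemma edge_key (d a b : ℝ) (hd : 0 < d) (ha : d ≤ a) (hb : d ≤ b) :
    d * (2 / (a + b)) ≤ 2 * Real.sqrt (a * b) / (a + b) ∧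
    (d * (2 / (a + b)) = 2 * Real.sqrt (a * b) / (a + b) ↔ a = d ∧ b = d) := by
  have hs : 0 < a + b := by linarith
  have hab : (0:ℝ) ≤ a * b := by nlinarith
  have hsq : d ≤ Real.sqrt (a * b) := by
    rw [show d = Real.sqrt (d * d) from (Real.sqrt_mul_self hd.le).symm]
    apply Real.sqrt_le_sqrt; nlinarith
  have hrw : d * (2 / (a + b)) = 2 * d / (a + b) := by ring
  refine ⟨?_, ?_, ?_⟩
  · rw [hrw]; gcongr
  · intro h
    rw [hrw] at h
    have h2 : d = Real.sqrt (a * b) := by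
      field_simp at h; linarith
    have h3 : d * d = a * b := by
      rw [h2]; exact Real.mul_self_sqrt hab
    constructor <;> nlinarith
  · rintro ⟨rfl, rfl⟩
    rw [Real.sqrt_mul_self hd.le]; ring



theorem stmt6 (hG : G.Connected) (hδ : 2 ≤ G.minDegree) :
    (G.minDegree : ℝ) * harmonicIndex G ≤ geoArithIndex G ∧
    ((G.minDegree : ℝ) * harmonicIndex G = geoArithIndex G ↔
      G.IsRegularOfDegree G.minDegree) := by
  have hδpos : 0 < (G.minDegree : ℝ) := by
    have : 0 < G.minDegree := by omega
    exact_mod_cast this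
  have hdeg : ∀ u v, G.Adj u v →
      (G.minDegree : ℝ) ≤ (G.degree u : ℝ) ∧ (G.minDegree : ℝ) ≤ (G.degree v : ℝ) := by
    intro u v _
    constructor <;> exact_mod_cast G.minDegree_le_degree _
  rw [harmonicIndex, geoArithIndex, Finset.mul_sum]
  have hle : ∀ e ∈ G.edgeFinset,
      (G.minDegree : ℝ) * Sym2.lift
        ⟨fun u v => 2 / ((G.degree u : ℝ) + (G.degree v : ℝ)),
         fun u v => by dsimp only; rw [add_comm ((G.degree u : ℝ)) ((G.degree v : ℝ))]⟩ e ≤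
      Sym2.lift
        ⟨fun u v => 2 * Real.sqrt ((G.degree u : ℝ) * (G.degree v : ℝ)) /
            ((G.degree u : ℝ) + (G.degree v : ℝ)),
         fun u v => by dsimp only; rw [mul_comm ((G.degree u : ℝ)) ((G.degree v : ℝ)),
            add_comm ((G.degree u : ℝ)) ((G.degree v : ℝ))]⟩ e := by
    intro e he
    induction e using Sym2.ind with
    | _ u v =>
      simp only [Sym2.lift_mk]
      rw [SimpleGraph.mem_edgeFinset, SimpleGraph.mem_edgeSet] at he
      obtain ⟨hu, hv⟩ := hdeg u v he
      exact (edge_key _ _ _ hδpos hu hv).1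
  refine ⟨Finset.sum_le_sum hle, ?_⟩
  rw [Finset.sum_eq_sum_iff_of_le hle]
  constructor
  · intro h v
    have hdv : 0 < G.degree v := by
      have := G.minDegree_le_degree v; omega
    obtain ⟨w, hw⟩ := (G.degree_pos_iff_exists_adj v).mp hdv
    have he : s(v, w) ∈ G.edgeFinset := by
      rw [SimpleGraph.mem_edgeFinset, SimpleGraph.mem_edgeSet]; exact hw
    have := h _ he
    simp only [Sym2.lift_mk] at this
    obtain ⟨hu', _⟩ := hdeg v w hw
    obtain ⟨h1, _⟩ := (edge_key _ _ _ hδpos hu' (hdeg v w hw).2).2.mp this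
    exact_mod_cast h1
  · intro hreg e he
    induction e using Sym2.ind with
    | _ u v =>
      simp only [Sym2.lift_mk]
      rw [SimpleGraph.mem_edgeFinset, SimpleGraph.mem_edgeSet] at he
      obtain ⟨hu, hv⟩ := hdeg u v he
      exact (edge_key _ _ _ hδpos hu hv).2.mpr
        ⟨by exact_mod_cast congrArg Nat.cast (hreg u), by exact_mod_cast congrArg Nat.cast (hreg v)⟩
end

section
/- Let G be a connected simple graph with n ≥ 3 vertices and minimum degree δ ≥ 2. Then (√(2(n−2))/(n−1)) · GA(G) ≤ ABC(G) ≤ ((n+1)/(4√(n−1))) · GA(G), with equality on the left if and only if G is isomorphic to the complete graph Kₙ, and equality on the right if and only if G is isomorphic to the cycle C₃. -/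
open Finset SimpleGraph

variable {V : Type*} [Fintype V] [DecidableEq V]

variable (G : SimpleGraph V) [DecidableRel G.Adj]


section AuxReal

private lemma poly_lower {c x y : ℝ} (hc : 2 ≤ c) (hx : 2 ≤ x) (hxc : x ≤ c) (hy : 2 ≤ y)
    (hyc : y ≤ c) : 8*(c-1)*(x*y)^2 ≤ (x+y-2)*(x+y)^2*c^2 := by
  nlinarith [mul_nonneg (mul_nonneg (sq_nonneg (x+y)) (sub_nonneg.2 (by linarith : x+y ≤ 2*c)))
      (by nlinarith : (0:ℝ) ≤ (c-1)*(x+y)-2*c),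
    mul_nonneg (mul_nonneg (by linarith : (0:ℝ) ≤ c-1) (sq_nonneg (x-y)))
      (by nlinarith : (0:ℝ) ≤ (x+y)^2+4*(x*y))]

private lemma poly_lower_strict {c x y : ℝ} (hc : 2 ≤ c) (hx : 2 ≤ x) (hxc : x ≤ c) (hy : 2 ≤ y)
    (hyc : y ≤ c) (hne : x ≠ c ∨ y ≠ c) :
    8*(c-1)*(x*y)^2 < (x+y-2)*(x+y)^2*c^2 := by
  have base1 : (0:ℝ) ≤ (x+y)^2*(2*c-(x+y))*((c-1)*(x+y)-2*c) :=
    mul_nonneg (mul_nonneg (sq_nonneg _) (by linarith)) (by nlinarith)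
  have base2 : (0:ℝ) ≤ (c-1)*(x-y)^2*((x+y)^2+4*(x*y)) :=
    mul_nonneg (mul_nonneg (by linarith) (sq_nonneg _)) (by nlinarith)
  by_cases hxy : x = y
  · subst hxy
    have hxc' : x < c := by
      rcases hne with h | h
      · exact lt_of_le_of_ne hxc h
      · exact lt_of_le_of_ne hxc h
    have hc2 : 2 < c := lt_of_le_of_lt hx hxc'
    nlinarith [mul_pos (mul_pos (by nlinarith : (0:ℝ) < (x+x)^2)
      (by linarith : (0:ℝ) < 2*c-(x+x))) (by nlinarith : (0:ℝ) < (c-1)*(x+x)-2*c)]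
  · have h2 : (0:ℝ) < (c-1)*(x-y)^2*((x+y)^2+4*(x*y)) := by
      apply mul_pos (mul_pos (by linarith)
        (by have h0 : x - y ≠ 0 := sub_ne_zero.2 hxy; positivity)) (by nlinarith)
    nlinarith

private lemma poly_upper {c x y : ℝ} (hc : 2 ≤ c) (hx : 2 ≤ x) (hxc : x ≤ c) (hy : 2 ≤ y)
    (hyc : y ≤ c) : 4*c*(x+y-2)*(x+y)^2 ≤ (c+2)^2*(x*y)^2 := by
  rcases le_or_gt (x+y) (c+2) with hs | hs
  · have h1 : 2*(x+y-2) ≤ x*y := by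
      nlinarith [mul_nonneg (by linarith : (0:ℝ) ≤ x-2) (by linarith : (0:ℝ) ≤ y-2)]
    have h2 : (2*(x+y-2))^2 ≤ (x*y)^2 := by nlinarith
    nlinarith [mul_nonneg (mul_nonneg (by linarith : (0:ℝ) ≤ x+y-2)
      (by linarith : (0:ℝ) ≤ c+2-(x+y))) (by nlinarith : (0:ℝ) ≤ c*(x+y)-2*c-4)]
  · have h1 : c*(x+y-c) ≤ x*y := by
      nlinarith [mul_nonneg (by linarith : (0:ℝ) ≤ c-x) (by linarith : (0:ℝ) ≤ c-y)]
    have h0 : (0:ℝ) ≤ c*(x+y-c) := by nlinarith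
    have h2 : (c*(x+y-c))^2 ≤ (x*y)^2 := by nlinarith
    have ha : (0:ℝ) ≤ x+y-c-2 := by linarith
    have hb : (0:ℝ) ≤ 2*c-(x+y) := by linarith
    set a := x+y-c-2 with ha'
    set b := 2*c-(x+y) with hb'
    have hchi : 0 ≤ c*(c+2)^2*(x+y-c)^2 - 4*(x+y-2)*(x+y)^2 := by
      have e : c*(c+2)^2*(x+y-c)^2 - 4*(x+y-2)*(x+y)^2 =
        48*(a*b) + 28*(a*b^2) + 4*(a*b^3) + 40*a^2 + 76*(a^2*b) + 22*(a^2*b^2) + a^2*b^3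
        + 44*a^3 + 32*(a^3*b) + 3*(a^3*b^2) + 14*a^4 + 3*(a^4*b) + a^5 := by
        simp only [ha', hb']; ring
      rw [e]
      nlinarith [mul_nonneg ha hb, mul_nonneg (mul_nonneg ha hb) hb,
        mul_nonneg (mul_nonneg (mul_nonneg ha hb) hb) hb, mul_nonneg ha ha,
        mul_nonneg (mul_nonneg ha ha) hb, mul_nonneg (mul_nonneg (mul_nonneg ha ha) hb) hb,
        mul_nonneg (mul_nonneg (mul_nonneg (mul_nonneg ha ha) hb) hb) hb,
        mul_nonneg (mul_nonneg ha ha) ha, mul_nonneg (mul_nonneg (mul_nonneg ha ha) ha) hb,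
        mul_nonneg (mul_nonneg (mul_nonneg (mul_nonneg ha ha) ha) hb) hb,
        mul_nonneg (mul_nonneg (mul_nonneg ha ha) ha) ha,
        mul_nonneg (mul_nonneg (mul_nonneg (mul_nonneg ha ha) ha) ha) hb,
        mul_nonneg (mul_nonneg (mul_nonneg (mul_nonneg ha ha) ha) ha) ha]
    nlinarith

private lemma poly_upper_strict {c x y : ℝ} (hc : 2 ≤ c) (hx : 2 ≤ x) (hxc : x ≤ c) (hy : 2 ≤ y)
    (hyc : y ≤ c) (hne : ¬((x = 2 ∧ y = c) ∨ (x = c ∧ y = 2))) :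
    4*c*(x+y-2)*(x+y)^2 < (c+2)^2*(x*y)^2 := by
  push_neg at hne
  obtain ⟨hne1, hne2⟩ := hne
  rcases lt_trichotomy (x+y) (c+2) with hs | hs | hs
  · have hc2 : 2 < c := by linarith
    have h1 : 2*(x+y-2) ≤ x*y := by
      nlinarith [mul_nonneg (by linarith : (0:ℝ) ≤ x-2) (by linarith : (0:ℝ) ≤ y-2)]
    have h2 : (2*(x+y-2))^2 ≤ (x*y)^2 := by nlinarith
    have key : 0 < (x+y-2)*((c+2-(x+y))*(c*(x+y)-2*c-4)) :=
      mul_pos (by linarith) (mul_pos (by linarith) (by nlinarith))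
    nlinarith
  · have hxy2 : (0:ℝ) < (x-2)*(y-2) := by
      rcases lt_or_eq_of_le hx with h2x | h2x
      · rcases lt_or_eq_of_le hy with h2y | h2y
        · apply mul_pos <;> linarith
        · exact absurd (by linarith) (hne2 (by linarith))
      · exact absurd (by linarith) (hne1 h2x.symm)
    have hp : 2*c < x*y := by nlinarith
    have e1 : 4*c*(x+y-2)*(x+y)^2 = (2*c)^2*(c+2)^2 := by rw [hs]; ring
    have h4 : (2*c)^2 < (x*y)^2 := by nlinarith
    have h5 := mul_lt_mul_of_pos_right h4 (by positivity : (0:ℝ) < (c+2)^2)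
    rw [e1]; nlinarith [h5]
  · have h1 : c*(x+y-c) ≤ x*y := by
      nlinarith [mul_nonneg (by linarith : (0:ℝ) ≤ c-x) (by linarith : (0:ℝ) ≤ c-y)]
    have h0 : (0:ℝ) ≤ c*(x+y-c) := by nlinarith
    have h2 : (c*(x+y-c))^2 ≤ (x*y)^2 := by nlinarith
    have ha : (0:ℝ) < x+y-c-2 := by linarith
    have hb : (0:ℝ) ≤ 2*c-(x+y) := by linarith
    set a := x+y-c-2 with ha'
    set b := 2*c-(x+y) with hb'
    have hchi : 0 < c*(c+2)^2*(x+y-c)^2 - 4*(x+y-2)*(x+y)^2 := by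
      have e : c*(c+2)^2*(x+y-c)^2 - 4*(x+y-2)*(x+y)^2 =
        48*(a*b) + 28*(a*b^2) + 4*(a*b^3) + 40*a^2 + 76*(a^2*b) + 22*(a^2*b^2) + a^2*b^3
        + 44*a^3 + 32*(a^3*b) + 3*(a^3*b^2) + 14*a^4 + 3*(a^4*b) + a^5 := by
        simp only [ha', hb']; ring
      rw [e]
      have ha0 : 0 ≤ a := le_of_lt ha
      nlinarith [mul_pos ha ha, mul_nonneg ha0 hb, mul_nonneg (mul_nonneg ha0 hb) hb,
        mul_nonneg (mul_nonneg (mul_nonneg ha0 hb) hb) hb,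
        mul_nonneg (mul_nonneg ha0 ha0) hb, mul_nonneg (mul_nonneg (mul_nonneg ha0 ha0) hb) hb,
        mul_nonneg (mul_nonneg (mul_nonneg (mul_nonneg ha0 ha0) hb) hb) hb,
        mul_nonneg (mul_nonneg ha0 ha0) ha0, mul_nonneg (mul_nonneg (mul_nonneg ha0 ha0) ha0) hb,
        mul_nonneg (mul_nonneg (mul_nonneg (mul_nonneg ha0 ha0) ha0) hb) hb,
        mul_nonneg (mul_nonneg (mul_nonneg ha0 ha0) ha0) ha0,
        mul_nonneg (mul_nonneg (mul_nonneg (mul_nonneg ha0 ha0) ha0) ha0) hb,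
        mul_nonneg (mul_nonneg (mul_nonneg (mul_nonneg ha0 ha0) ha0) ha0) ha0]
    nlinarith

private lemma aux_lower {c x y : ℝ} (hc : 2 ≤ c) (hx : 2 ≤ x) (hxc : x ≤ c) (hy : 2 ≤ y)
    (hyc : y ≤ c) :
    Real.sqrt (2*(c-1)) / c * (2 * Real.sqrt (x*y) / (x+y)) ≤ Real.sqrt ((x+y-2)/(x*y)) := by
  have hc0 : (0:ℝ) < c := by linarith
  have hx0 : (0:ℝ) < x := by linarith
  have hy0 : (0:ℝ) < y := by linarith
  have hL0 : 0 ≤ Real.sqrt (2*(c-1)) / c * (2 * Real.sqrt (x*y) / (x+y)) :=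
    mul_nonneg (div_nonneg (Real.sqrt_nonneg _) hc0.le)
      (div_nonneg (by positivity) (by linarith))
  rw [Real.le_sqrt hL0 (div_nonneg (by linarith) (by positivity))]
  have hsq : (Real.sqrt (2*(c-1)) / c * (2 * Real.sqrt (x*y) / (x+y)))^2
      = 2*(c-1) * (2^2*(x*y)) / (c^2*(x+y)^2) := by
    rw [mul_pow, div_pow, div_pow, mul_pow, Real.sq_sqrt (by linarith),
      Real.sq_sqrt (by positivity)]
    rw [div_mul_div_comm]
  rw [hsq, div_le_div_iff₀ (by positivity) (by positivity)]
  nlinarith [poly_lower hc hx hxc hy hyc]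

private lemma aux_lower_strict {c x y : ℝ} (hc : 2 ≤ c) (hx : 2 ≤ x) (hxc : x ≤ c) (hy : 2 ≤ y)
    (hyc : y ≤ c) (hne : x ≠ c ∨ y ≠ c) :
    Real.sqrt (2*(c-1)) / c * (2 * Real.sqrt (x*y) / (x+y)) < Real.sqrt ((x+y-2)/(x*y)) := by
  have hc0 : (0:ℝ) < c := by linarith
  have hx0 : (0:ℝ) < x := by linarith
  have hy0 : (0:ℝ) < y := by linarith
  have hL0 : 0 ≤ Real.sqrt (2*(c-1)) / c * (2 * Real.sqrt (x*y) / (x+y)) :=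
    mul_nonneg (div_nonneg (Real.sqrt_nonneg _) hc0.le)
      (div_nonneg (by positivity) (by linarith))
  rw [Real.lt_sqrt hL0]
  have hsq : (Real.sqrt (2*(c-1)) / c * (2 * Real.sqrt (x*y) / (x+y)))^2
      = 2*(c-1) * (2^2*(x*y)) / (c^2*(x+y)^2) := by
    rw [mul_pow, div_pow, div_pow, mul_pow, Real.sq_sqrt (by linarith),
      Real.sq_sqrt (by positivity)]
    rw [div_mul_div_comm]
  rw [hsq, div_lt_div_iff₀ (by positivity) (by positivity)]
  nlinarith [poly_lower_strict hc hx hxc hy hyc hne]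

private lemma aux_lower_eq {c : ℝ} (hc : 2 ≤ c) :
    Real.sqrt (2*(c-1)) / c * (2 * Real.sqrt (c*c) / (c+c)) = Real.sqrt ((c+c-2)/(c*c)) := by
  have hc0 : (0:ℝ) < c := by linarith
  have h1 : (c+c-2)/(c*c) = (2*(c-1))/c^2 := by field_simp; ring
  rw [h1, Real.sqrt_div (by linarith) , Real.sqrt_sq hc0.le, Real.sqrt_mul_self hc0.le]
  field_simp
  ring

private lemma aux_upper {c x y : ℝ} (hc : 2 ≤ c) (hx : 2 ≤ x) (hxc : x ≤ c) (hy : 2 ≤ y)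
    (hyc : y ≤ c) :
    Real.sqrt ((x+y-2)/(x*y)) ≤ (c+2)/(4*Real.sqrt c) * (2 * Real.sqrt (x*y) / (x+y)) := by
  have hc0 : (0:ℝ) < c := by linarith
  have hx0 : (0:ℝ) < x := by linarith
  have hy0 : (0:ℝ) < y := by linarith
  have hsc : (0:ℝ) < Real.sqrt c := Real.sqrt_pos.2 hc0
  have hR0 : 0 ≤ (c+2)/(4*Real.sqrt c) * (2 * Real.sqrt (x*y) / (x+y)) :=
    mul_nonneg (div_nonneg (by linarith) (by positivity))
      (div_nonneg (by positivity) (by linarith))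
  rw [Real.sqrt_le_iff]
  refine ⟨hR0, ?_⟩
  have hsq : ((c+2)/(4*Real.sqrt c) * (2 * Real.sqrt (x*y) / (x+y)))^2
      = (c+2)^2 * (2^2*(x*y)) / ((4^2*c)*(x+y)^2) := by
    rw [mul_pow, div_pow, div_pow, mul_pow, mul_pow, Real.sq_sqrt hc0.le,
      Real.sq_sqrt (by positivity)]
    rw [div_mul_div_comm]
  rw [hsq, div_le_div_iff₀ (by positivity) (by positivity)]
  nlinarith [poly_upper hc hx hxc hy hyc]

private lemma aux_upper_strict {c x y : ℝ} (hc : 2 ≤ c) (hx : 2 ≤ x) (hxc : x ≤ c) (hy : 2 ≤ y)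
    (hyc : y ≤ c) (hne : ¬((x = 2 ∧ y = c) ∨ (x = c ∧ y = 2))) :
    Real.sqrt ((x+y-2)/(x*y)) < (c+2)/(4*Real.sqrt c) * (2 * Real.sqrt (x*y) / (x+y)) := by
  have hc0 : (0:ℝ) < c := by linarith
  have hx0 : (0:ℝ) < x := by linarith
  have hy0 : (0:ℝ) < y := by linarith
  have hsc : (0:ℝ) < Real.sqrt c := Real.sqrt_pos.2 hc0
  have hR0 : 0 < (c+2)/(4*Real.sqrt c) * (2 * Real.sqrt (x*y) / (x+y)) :=
    mul_pos (div_pos (by linarith) (by positivity))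
      (div_pos (by positivity) (by linarith))
  rw [Real.sqrt_lt' hR0]
  have hsq : ((c+2)/(4*Real.sqrt c) * (2 * Real.sqrt (x*y) / (x+y)))^2
      = (c+2)^2 * (2^2*(x*y)) / ((4^2*c)*(x+y)^2) := by
    rw [mul_pow, div_pow, div_pow, mul_pow, mul_pow, Real.sq_sqrt hc0.le,
      Real.sq_sqrt (by positivity)]
    rw [div_mul_div_comm]
  rw [hsq, div_lt_div_iff₀ (by positivity) (by positivity)]
  nlinarith [poly_upper_strict hc hx hxc hy hyc hne]

private lemma aux_upper_eq :
    Real.sqrt (((2:ℝ)+2-2)/(2*2)) = ((2:ℝ)+2)/(4*Real.sqrt 2) * (2 * Real.sqrt (2*2) / (2+2)) := by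
  have h2 : Real.sqrt ((2:ℝ)*2) = 2 := Real.sqrt_mul_self (by norm_num)
  have hs2 : (0:ℝ) < Real.sqrt 2 := Real.sqrt_pos.2 (by norm_num)
  have h1 : ((2:ℝ)+2-2)/(2*2) = 2⁻¹ := by norm_num
  rw [h1, Real.sqrt_inv, h2]
  have h3 : Real.sqrt 2 * Real.sqrt 2 = 2 := Real.mul_self_sqrt (by norm_num)
  field_simp
  linarith [h3]

end AuxReal

private lemma iso_degree {V W : Type*} [Fintype V] [Fintype W]
    (G : SimpleGraph V) (H : SimpleGraph W) [DecidableRel G.Adj] [DecidableRel H.Adj]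
    (f : G ≃g H) (v : V) : G.degree v = H.degree (f v) := by
  rw [← SimpleGraph.card_neighborSet_eq_degree, ← SimpleGraph.card_neighborSet_eq_degree]
  exact Fintype.card_congr (f.mapNeighborSet v)

private lemma adj_of_degree_full {V : Type*} [Fintype V] [DecidableEq V]
    (G : SimpleGraph V) [DecidableRel G.Adj] {w v : V}
    (h : G.degree w = Fintype.card V - 1) (hne : v ≠ w) : G.Adj w v := by
  have hsub : G.neighborFinset w ⊆ Finset.univ.erase w := fun z hz =>
    Finset.mem_erase.2 ⟨(G.ne_of_adj ((SimpleGraph.mem_neighborFinset _ _ _).1 hz)).symm,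
      Finset.mem_univ z⟩
  have hcard : (Finset.univ.erase w).card ≤ (G.neighborFinset w).card := by
    rw [Finset.card_erase_of_mem (Finset.mem_univ w), Finset.card_univ,
      G.card_neighborFinset_eq_degree, h]
  have heq := Finset.eq_of_subset_of_card_le hsub hcard
  have hv : v ∈ Finset.univ.erase w := Finset.mem_erase.2 ⟨hne, Finset.mem_univ v⟩
  rw [← heq] at hv
  exact (SimpleGraph.mem_neighborFinset _ _ _).1 hv

private lemma eq_top_of_degree_full {V : Type*} [Fintype V] [DecidableEq V]
    (G : SimpleGraph V) [DecidableRel G.Adj]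
    (h : ∀ v, G.degree v = Fintype.card V - 1) : G = ⊤ := by
  ext u v
  simp only [SimpleGraph.top_adj]
  constructor
  · exact G.ne_of_adj
  · intro huv
    exact (adj_of_degree_full G (h v) huv).symm

theorem stmt7 (hG : G.Connected) (n : ℕ) (hn : Fintype.card V = n) (hn3 : 3 ≤ n)
    (hδ : 2 ≤ G.minDegree) :
    Real.sqrt (2 * ((n : ℝ) - 2)) / ((n : ℝ) - 1) * geoArithIndex G ≤ abcIndex G ∧
    abcIndex G ≤ ((n : ℝ) + 1) / (4 * Real.sqrt ((n : ℝ) - 1)) * geoArithIndex G ∧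
    (Real.sqrt (2 * ((n : ℝ) - 2)) / ((n : ℝ) - 1) * geoArithIndex G = abcIndex G ↔
      Nonempty (G ≃g completeGraph (Fin n))) ∧
    (abcIndex G = ((n : ℝ) + 1) / (4 * Real.sqrt ((n : ℝ) - 1)) * geoArithIndex G ↔
      Nonempty (G ≃g cycleGraph 3)) := by
  classical
  have hn3R : (3:ℝ) ≤ (n:ℝ) := by exact_mod_cast hn3
  have hc : 2 ≤ (n:ℝ) - 1 := by linarith
  have hc1 : 2*((n:ℝ)-2) = 2*(((n:ℝ)-1)-1) := by ring
  have hc2 : (n:ℝ)+1 = ((n:ℝ)-1)+2 := by ring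
  have hdlo' : ∀ v : V, 2 ≤ G.degree v := fun v => hδ.trans (G.minDegree_le_degree v)
  have hdlo : ∀ v : V, (2:ℝ) ≤ (G.degree v : ℝ) := fun v => by exact_mod_cast hdlo' v
  have hdhiN : ∀ v : V, G.degree v ≤ n - 1 := fun v => by
    have h := G.degree_lt_card_verts v; rw [hn] at h; omega
  have hdhi : ∀ v : V, (G.degree v : ℝ) ≤ (n:ℝ)-1 := fun v => by
    have h : (G.degree v : ℝ) ≤ ((n-1:ℕ):ℝ) := by exact_mod_cast hdhiN v
    rw [Nat.cast_sub (by omega : 1 ≤ n)] at h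
    simpa using h
  have hcastn : ∀ w : V, ((G.degree w : ℝ) = (n:ℝ)-1) ↔ G.degree w = n-1 := by
    intro w
    rw [show ((n:ℝ)-1) = ((n-1:ℕ):ℝ) by
      rw [Nat.cast_sub (by omega : 1 ≤ n)]; norm_num, Nat.cast_inj]
  have hcast2 : ∀ w : V, ((G.degree w : ℝ) = 2) ↔ G.degree w = 2 := by
    intro w; exact_mod_cast Iff.rfl
  -- per-edge lower bound, all edges
  have hle_lower : ∀ e ∈ G.edgeFinset,
      Real.sqrt (2 * ((n : ℝ) - 2)) / ((n : ℝ) - 1) * ((Sym2.lift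
    ⟨fun u v => 2 * Real.sqrt ((G.degree u : ℝ) * (G.degree v : ℝ)) /
        ((G.degree u : ℝ) + (G.degree v : ℝ)),
     fun u v => by dsimp only; rw [mul_comm ((G.degree u : ℝ)) ((G.degree v : ℝ)),
        add_comm ((G.degree u : ℝ)) ((G.degree v : ℝ))]⟩) e) ≤ (Sym2.lift
    ⟨fun u v => Real.sqrt (((G.degree u : ℝ) + (G.degree v : ℝ) - 2) /
        ((G.degree u : ℝ) * (G.degree v : ℝ))),
     fun u v => by dsimp only; rw [add_comm ((G.degree u : ℝ)) ((G.degree v : ℝ)),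
        mul_comm ((G.degree u : ℝ)) ((G.degree v : ℝ))]⟩) e := by
    refine fun e => Sym2.ind (fun u v he => ?_) e
    simp only [Sym2.lift_mk]
    rw [hc1]
    exact aux_lower hc (hdlo u) (hdhi u) (hdlo v) (hdhi v)
  -- per-edge upper bound, all edges
  have hle_upper : ∀ e ∈ G.edgeFinset,
      (Sym2.lift
    ⟨fun u v => Real.sqrt (((G.degree u : ℝ) + (G.degree v : ℝ) - 2) /
        ((G.degree u : ℝ) * (G.degree v : ℝ))),
     fun u v => by dsimp only; rw [add_comm ((G.degree u : ℝ)) ((G.degree v : ℝ)),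
        mul_comm ((G.degree u : ℝ)) ((G.degree v : ℝ))]⟩) e ≤ ((n : ℝ) + 1) / (4 * Real.sqrt ((n : ℝ) - 1)) * ((Sym2.lift
    ⟨fun u v => 2 * Real.sqrt ((G.degree u : ℝ) * (G.degree v : ℝ)) /
        ((G.degree u : ℝ) + (G.degree v : ℝ)),
     fun u v => by dsimp only; rw [mul_comm ((G.degree u : ℝ)) ((G.degree v : ℝ)),
        add_comm ((G.degree u : ℝ)) ((G.degree v : ℝ))]⟩) e) := by
    refine fun e => Sym2.ind (fun u v he => ?_) e
    simp only [Sym2.lift_mk]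
    rw [hc2]
    exact aux_upper hc (hdlo u) (hdhi u) (hdlo v) (hdhi v)
  have hsum_lower : Real.sqrt (2 * ((n : ℝ) - 2)) / ((n : ℝ) - 1) * geoArithIndex G ≤
      abcIndex G := by
    unfold abcIndex geoArithIndex
    rw [Finset.mul_sum]
    exact Finset.sum_le_sum hle_lower
  have hsum_upper : abcIndex G ≤ ((n : ℝ) + 1) / (4 * Real.sqrt ((n : ℝ) - 1)) * geoArithIndex G := by
    unfold abcIndex geoArithIndex
    rw [Finset.mul_sum]
    exact Finset.sum_le_sum hle_upper
  refine ⟨hsum_lower, hsum_upper, ?_, ?_⟩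
  · -- lower equality iff complete graph
    constructor
    · intro hEq
      -- all degrees are n-1
      have hdall : ∀ v : V, G.degree v = n - 1 := by
        intro v
        by_contra hnedeg
        obtain ⟨u, hu⟩ : ∃ u, G.Adj v u := by
          have hpos : 0 < (G.neighborFinset v).card := by
            rw [G.card_neighborFinset_eq_degree]
            have := hdlo' v; omega
          obtain ⟨u, hu⟩ := Finset.card_pos.1 hpos
          exact ⟨u, (SimpleGraph.mem_neighborFinset _ _ _).1 hu⟩
        have hmem : s(v, u) ∈ G.edgeFinset := SimpleGraph.mem_edgeFinset.2 hu
        have hstrict : Real.sqrt (2 * ((n : ℝ) - 2)) / ((n : ℝ) - 1) * ((Sym2.lift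
    ⟨fun u v => 2 * Real.sqrt ((G.degree u : ℝ) * (G.degree v : ℝ)) /
        ((G.degree u : ℝ) + (G.degree v : ℝ)),
     fun u v => by dsimp only; rw [mul_comm ((G.degree u : ℝ)) ((G.degree v : ℝ)),
        add_comm ((G.degree u : ℝ)) ((G.degree v : ℝ))]⟩) s(v,u))
            < (Sym2.lift
    ⟨fun u v => Real.sqrt (((G.degree u : ℝ) + (G.degree v : ℝ) - 2) /
        ((G.degree u : ℝ) * (G.degree v : ℝ))),
     fun u v => by dsimp only; rw [add_comm ((G.degree u : ℝ)) ((G.degree v : ℝ)),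
        mul_comm ((G.degree u : ℝ)) ((G.degree v : ℝ))]⟩) s(v,u) := by
          simp only [Sym2.lift_mk]
          rw [hc1]
          refine aux_lower_strict hc (hdlo v) (hdhi v) (hdlo u) (hdhi u) (Or.inl ?_)
          intro hr
          exact hnedeg ((hcastn v).1 hr)
        have hlt : (∑ e ∈ G.edgeFinset,
              Real.sqrt (2 * ((n : ℝ) - 2)) / ((n : ℝ) - 1) * ((Sym2.lift
    ⟨fun u v => 2 * Real.sqrt ((G.degree u : ℝ) * (G.degree v : ℝ)) /
        ((G.degree u : ℝ) + (G.degree v : ℝ)),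
     fun u v => by dsimp only; rw [mul_comm ((G.degree u : ℝ)) ((G.degree v : ℝ)),
        add_comm ((G.degree u : ℝ)) ((G.degree v : ℝ))]⟩) e))
            < ∑ e ∈ G.edgeFinset, (Sym2.lift
    ⟨fun u v => Real.sqrt (((G.degree u : ℝ) + (G.degree v : ℝ) - 2) /
        ((G.degree u : ℝ) * (G.degree v : ℝ))),
     fun u v => by dsimp only; rw [add_comm ((G.degree u : ℝ)) ((G.degree v : ℝ)),
        mul_comm ((G.degree u : ℝ)) ((G.degree v : ℝ))]⟩) e :=
          Finset.sum_lt_sum hle_lower ⟨s(v,u), hmem, hstrict⟩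
        rw [← Finset.mul_sum] at hlt
        exact absurd hEq (ne_of_lt hlt)
      have htop : G = ⊤ := eq_top_of_degree_full G (fun v => by rw [hdall v, hn])
      exact ⟨⟨Fintype.equivFinOfCardEq hn, by
        intro a b
        simp [htop, completeGraph_eq_top, Equiv.apply_eq_iff_eq]⟩⟩
    · rintro ⟨f⟩
      have htop : G = ⊤ := by
        ext u v
        simp only [SimpleGraph.top_adj]
        rw [← f.map_rel_iff]
        show (f u ≠ f v) ↔ (u ≠ v)
        simp
      have hGadj : ∀ u v : V, G.Adj u v ↔ u ≠ v := by
        intro u v; rw [htop]; exact Iff.rfl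
      have hdall : ∀ v : V, G.degree v = n - 1 := by
        intro v
        rw [← G.card_neighborFinset_eq_degree]
        have hnb : G.neighborFinset v = Finset.univ.erase v := by
          ext w
          simp only [SimpleGraph.mem_neighborFinset, Finset.mem_erase, Finset.mem_univ,
            and_true, hGadj]
          exact ne_comm
        rw [hnb, Finset.card_erase_of_mem (Finset.mem_univ v), Finset.card_univ, hn]
      have hdR : ∀ w : V, (G.degree w : ℝ) = (n:ℝ)-1 := fun w => (hcastn w).2 (hdall w)
      unfold abcIndex geoArithIndex
      rw [Finset.mul_sum]
      refine Finset.sum_congr rfl fun e => Sym2.ind (fun u v he => ?_) e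
      simp only [Sym2.lift_mk]
      rw [hdR u, hdR v, hc1]
      exact aux_lower_eq hc
  · -- upper equality iff C3
    constructor
    · intro hEq
      have hall : ∀ e ∈ G.edgeFinset, (Sym2.lift
    ⟨fun u v => Real.sqrt (((G.degree u : ℝ) + (G.degree v : ℝ) - 2) /
        ((G.degree u : ℝ) * (G.degree v : ℝ))),
     fun u v => by dsimp only; rw [add_comm ((G.degree u : ℝ)) ((G.degree v : ℝ)),
        mul_comm ((G.degree u : ℝ)) ((G.degree v : ℝ))]⟩) e =
          ((n : ℝ) + 1) / (4 * Real.sqrt ((n : ℝ) - 1)) * ((Sym2.lift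
    ⟨fun u v => 2 * Real.sqrt ((G.degree u : ℝ) * (G.degree v : ℝ)) /
        ((G.degree u : ℝ) + (G.degree v : ℝ)),
     fun u v => by dsimp only; rw [mul_comm ((G.degree u : ℝ)) ((G.degree v : ℝ)),
        add_comm ((G.degree u : ℝ)) ((G.degree v : ℝ))]⟩) e) := by
        refine (Finset.sum_eq_sum_iff_of_le hle_upper).1 ?_
        rw [← Finset.mul_sum]
        exact hEq
      have hedge : ∀ u v : V, G.Adj u v →
          (G.degree u = 2 ∧ G.degree v = n-1) ∨ (G.degree u = n-1 ∧ G.degree v = 2) := by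
        intro u v huv
        have hmem : s(u, v) ∈ G.edgeFinset := SimpleGraph.mem_edgeFinset.2 huv
        have heq := hall _ hmem
        simp only [Sym2.lift_mk] at heq
        by_contra hcon
        have hcon' : ¬ ((((G.degree u:ℝ)) = 2 ∧ ((G.degree v:ℝ)) = (n:ℝ)-1) ∨
            (((G.degree u:ℝ)) = (n:ℝ)-1 ∧ ((G.degree v:ℝ)) = 2)) := by
          simp only [hcast2, hcastn]
          exact hcon
        have hstrict := aux_upper_strict hc (hdlo u) (hdhi u) (hdlo v) (hdhi v) hcon'
        rw [hc2] at heq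
        exact absurd heq (ne_of_lt hstrict)
      by_cases h3 : n = 3
      · subst h3
        have hdall : ∀ v : V, G.degree v = 3 - 1 := by
          intro v
          obtain ⟨u, hu⟩ : ∃ u, G.Adj v u := by
            have hpos : 0 < (G.neighborFinset v).card := by
              rw [G.card_neighborFinset_eq_degree]
              have := hdlo' v; omega
            obtain ⟨u, hu⟩ := Finset.card_pos.1 hpos
            exact ⟨u, (SimpleGraph.mem_neighborFinset _ _ _).1 hu⟩
          rcases hedge v u hu with ⟨h1, _⟩ | ⟨h1, _⟩ <;> omega
        have htop : G = ⊤ := eq_top_of_degree_full G (fun v => by rw [hdall v, hn])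
        refine ⟨⟨Fintype.equivFinOfCardEq hn, ?_⟩⟩
        intro a b
        rw [cycleGraph_three_eq_top, htop]
        simp [Equiv.apply_eq_iff_eq]
      · -- n ≥ 4 : contradiction
        exfalso
        have hn4 : 4 ≤ n := by omega
        haveI : Nonempty V := Fintype.card_pos_iff.1 (by rw [hn]; omega)
        obtain ⟨v0⟩ := ‹Nonempty V›
        obtain ⟨v1, hv01⟩ : ∃ u, G.Adj v0 u := by
          have hpos : 0 < (G.neighborFinset v0).card := by
            rw [G.card_neighborFinset_eq_degree]
            have := hdlo' v0; omega
          obtain ⟨u, hu⟩ := Finset.card_pos.1 hpos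
          exact ⟨u, (SimpleGraph.mem_neighborFinset _ _ _).1 hu⟩
        -- get an adjacent pair (a,b) with deg a = 2, deg b = n-1
        obtain ⟨a, b, hab, ha2, hbc⟩ : ∃ a b, G.Adj a b ∧ G.degree a = 2 ∧
            G.degree b = n - 1 := by
          rcases hedge v0 v1 hv01 with ⟨h1, h2⟩ | ⟨h1, h2⟩
          · exact ⟨v0, v1, hv01, h1, h2⟩
          · exact ⟨v1, v0, hv01.symm, h2, h1⟩
        -- a has another neighbor w ≠ b
        obtain ⟨w, hw, hwb⟩ : ∃ w ∈ G.neighborFinset a, w ≠ b := by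
          refine Finset.exists_mem_ne ?_ b
          rw [G.card_neighborFinset_eq_degree, ha2]; omega
        have haw : G.Adj a w := (SimpleGraph.mem_neighborFinset _ _ _).1 hw
        have hwc : G.degree w = n - 1 := by
          rcases hedge a w haw with ⟨_, h2⟩ | ⟨h1, _⟩
          · exact h2
          · omega
        have hwv : G.Adj w b := by
          apply adj_of_degree_full G (by rw [hwc, hn]) hwb.symm
        rcases hedge w b hwv with ⟨h1, _⟩ | ⟨_, h2⟩
        · omega
        · omega
    · rintro ⟨f⟩
      have hcard3 : n = 3 := by
        have := f.card_eq
        rw [hn] at this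
        simpa using this
      subst hcard3
      have hdall : ∀ v : V, G.degree v = 2 := by
        intro v
        rw [iso_degree G _ f v]
        exact cycleGraph_degree_three_le
      have hdR : ∀ w : V, (G.degree w : ℝ) = 2 := fun w => by rw [hdall w]; norm_num
      unfold abcIndex geoArithIndex
      rw [Finset.mul_sum]
      refine Finset.sum_congr rfl fun e => Sym2.ind (fun u v he => ?_) e
      simp only [Sym2.lift_mk]
      rw [hdR u, hdR v]
      rw [show ((3:ℕ):ℝ)+1 = (2:ℝ)+2 by norm_num, show ((3:ℕ):ℝ)-1 = (2:ℝ) by norm_num]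
      exact aux_upper_eq
end

section
/- Let G be a connected simple graph with minimum degree δ ≥ 2 and maximum degree Δ satisfying Δ − δ ≤ (2δ − 1)². Then H(G) ≤ R(G) ≤ X(G) < ABC(G) < GA(G), with H(G) = R(G) if and only if G is a regular graph, and R(G) = X(G) if and only if G is a cycle. -/
/-
Each index is a sum over the edges of a function of the end-degrees `x, y ≥ 2`, so every
comparison is pointwise: AM-GM for `H ≤ R` (equality iff `x = y`), `x + y ≤ xy` for `R ≤ X`
(equality iff `x = y = 2`), and for `ABC < GA` the inequality `(x + y - 2)(x + y)² < 4x²y²`,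
valid for `x ≤ y ≤ x + (2x - 1)²`, which the bound on `Δ - δ` guarantees on every edge.
Equality `H = R` makes degrees constant along edges, hence on the connected graph. Equality
`R = X` makes `G` 2-regular; a connected 2-regular graph has a Hamiltonian cycle, and this copy of
a cycle graph preserves degrees, so it also reflects adjacency and is an isomorphism.
-/

open Finset SimpleGraph

variable {V : Type*} [Fintype V] [DecidableEq V]

namespace Real

theorem two_div_add_le_one_div_sqrt_mul {x y : ℝ} (hx : 0 < x) (hy : 0 < y) :
    2 / (x + y) ≤ 1 / √(x * y) := by
  have hs : √(x * y) ≤ (x + y) / 2 :=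
    sqrt_le_iff.2 ⟨by positivity, by nlinarith [sq_nonneg (x - y)]⟩
  rw [div_le_div_iff₀ (by positivity) (by positivity)]
  linarith

theorem two_div_add_eq_one_div_sqrt_mul_iff {x y : ℝ} (hx : 0 < x) (hy : 0 < y) :
    2 / (x + y) = 1 / √(x * y) ↔ x = y := by
  rw [div_eq_div_iff (by positivity) (by positivity), one_mul]
  constructor
  · intro h
    have hsq : 4 * (x * y) = (x + y) ^ 2 := by
      rw [← h, mul_pow, sq_sqrt (by positivity)]; ring
    nlinarith [sq_nonneg (x - y)]
  · rintro rfl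
    rw [sqrt_mul_self hx.le]; ring

theorem one_div_sqrt_mul_le_one_div_sqrt_add {x y : ℝ} (hx : 2 ≤ x) (hy : 2 ≤ y) :
    1 / √(x * y) ≤ 1 / √(x + y) :=
  one_div_le_one_div_of_le (sqrt_pos.2 (by positivity)) (sqrt_le_sqrt (by nlinarith))

theorem one_div_sqrt_mul_eq_one_div_sqrt_add_iff {x y : ℝ} (hx : 2 ≤ x) (hy : 2 ≤ y) :
    1 / √(x * y) = 1 / √(x + y) ↔ x = 2 ∧ y = 2 := by
  rw [one_div, one_div, inv_inj, sqrt_inj (by positivity) (by positivity)]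
  constructor
  · intro h
    constructor <;> nlinarith
  · rintro ⟨rfl, rfl⟩; norm_num

theorem one_div_sqrt_add_lt_sqrt_div {x y : ℝ} (hx : 2 ≤ x) (hy : 2 ≤ y) :
    1 / √(x + y) < √((x + y - 2) / (x * y)) := by
  rw [one_div, ← sqrt_inv]
  refine sqrt_lt_sqrt (by positivity) ?_
  rw [inv_eq_one_div, div_lt_div_iff₀ (by positivity) (by positivity)]
  nlinarith

theorem sqrt_div_lt_two_mul_sqrt_div_of_le {x y : ℝ} (hx : 2 ≤ x) (hxy : x ≤ y)
    (hy : y ≤ x + (2 * x - 1) ^ 2) :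
    √((x + y - 2) / (x * y)) < 2 * √(x * y) / (x + y) := by
  have hpos : 0 < x * y := by nlinarith
  have hrhs : 2 * √(x * y) / (x + y) = √(4 * (x * y) / (x + y) ^ 2) := by
    rw [sqrt_div' _ (sq_nonneg _), sqrt_sq (by linarith), sqrt_mul' _ hpos.le,
      show (4 : ℝ) = 2 ^ 2 by norm_num, sqrt_sq zero_le_two]
  rw [hrhs]
  refine sqrt_lt_sqrt (div_nonneg (by linarith) hpos.le) ?_
  rw [div_lt_div_iff₀ hpos (pow_pos (by linarith) 2)]
  nlinarith [mul_nonneg (sub_nonneg.2 hxy) (sub_nonneg.2 hy)]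

theorem sqrt_div_lt_two_mul_sqrt_div {x y : ℝ} (hx : 2 ≤ x) (hy : 2 ≤ y)
    (hxy : y ≤ x + (2 * x - 1) ^ 2) (hyx : x ≤ y + (2 * y - 1) ^ 2) :
    √((x + y - 2) / (x * y)) < 2 * √(x * y) / (x + y) := by
  rcases le_total x y with h | h
  · exact sqrt_div_lt_two_mul_sqrt_div_of_le hx h hxy
  · rw [add_comm x y, mul_comm x y]
    exact sqrt_div_lt_two_mul_sqrt_div_of_le hy h hyx

end Real

namespace SimpleGraph

variable {α : Type*}

section EdgeSum

variable {M : Type*} [Fintype α] (G : SimpleGraph α) [DecidableRel G.Adj]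
  {f g : {f : α → α → M // ∀ a b, f a b = f b a}}

theorem forall_mem_edgeFinset_sym2Lift (r : M → M → Prop)
    (h : ∀ u v, G.Adj u v → r (f.1 u v) (g.1 u v)) :
    ∀ e ∈ G.edgeFinset, r (Sym2.lift f e) (Sym2.lift g e) := by
  intro e he
  induction e using Sym2.ind with
  | _ u v => exact h u v (mem_edgeFinset.1 he)

variable [AddCommMonoid M] [PartialOrder M] [IsOrderedCancelAddMonoid M]

theorem sum_sym2Lift_le_sum_sym2Lift (h : ∀ u v, G.Adj u v → f.1 u v ≤ g.1 u v) :
    ∑ e ∈ G.edgeFinset, Sym2.lift f e ≤ ∑ e ∈ G.edgeFinset, Sym2.lift g e :=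
  sum_le_sum (G.forall_mem_edgeFinset_sym2Lift _ h)

theorem sum_sym2Lift_lt_sum_sym2Lift (hE : G.edgeFinset.Nonempty)
    (h : ∀ u v, G.Adj u v → f.1 u v < g.1 u v) :
    ∑ e ∈ G.edgeFinset, Sym2.lift f e < ∑ e ∈ G.edgeFinset, Sym2.lift g e :=
  sum_lt_sum_of_nonempty hE (G.forall_mem_edgeFinset_sym2Lift _ h)

theorem sum_sym2Lift_eq_sum_sym2Lift_iff (h : ∀ u v, G.Adj u v → f.1 u v ≤ g.1 u v) :
    ∑ e ∈ G.edgeFinset, Sym2.lift f e = ∑ e ∈ G.edgeFinset, Sym2.lift g e ↔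
      ∀ u v, G.Adj u v → f.1 u v = g.1 u v := by
  rw [sum_eq_sum_iff_of_le (G.forall_mem_edgeFinset_sym2Lift _ h)]
  exact ⟨fun h u v huv => h s(u, v) (G.mem_edgeFinset.2 huv),
    G.forall_mem_edgeFinset_sym2Lift _⟩

end EdgeSum

theorem cycleGraph_degree_eq_two {n : ℕ} (hn : 3 ≤ n) (v : Fin n) :
    (cycleGraph n).degree v = 2 := by
  obtain ⟨k, rfl⟩ := Nat.exists_eq_add_of_le' hn
  exact cycleGraph_degree_three_le

section Copy

variable {β : Type*} [Fintype α] [Fintype β] {G : SimpleGraph α} [DecidableRel G.Adj]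
  {H : SimpleGraph β} [DecidableRel H.Adj]

theorem Copy.adj_of_degree_eq (f : Copy H G) (hdeg : ∀ a, H.degree a = G.degree (f a))
    {a b : β} (hab : G.Adj (f a) (f b)) : H.Adj a b := by
  have hsub : (H.neighborFinset a).map f.toEmbedding ⊆ G.neighborFinset (f a) := by
    intro x hx
    obtain ⟨c, hc, rfl⟩ := mem_map.1 hx
    exact (G.mem_neighborFinset _ _).2 (f.toHom.map_adj ((H.mem_neighborFinset _ _).1 hc))
  have heq := eq_of_subset_of_card_le hsub (by rw [card_map, card_neighborFinset_eq_degree,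
    card_neighborFinset_eq_degree, hdeg])
  have hb : f.toEmbedding b ∈ (H.neighborFinset a).map f.toEmbedding :=
    heq ▸ (G.mem_neighborFinset _ _).2 hab
  exact (H.mem_neighborFinset _ _).1 ((mem_map' _).1 hb)

noncomputable def Copy.isoOfDegreeEq (f : Copy H G) (hcard : Fintype.card β = Fintype.card α)
    (hdeg : ∀ a, H.degree a = G.degree (f a)) : H ≃g G where
  toEquiv := Equiv.ofBijective f
    ((Fintype.bijective_iff_injective_and_card f).2 ⟨f.injective, hcard⟩)
  map_rel_iff' := ⟨f.adj_of_degree_eq hdeg, f.toHom.map_adj⟩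

end Copy

theorem Connected.exists_isHamiltonianCycle_of_isCycles [Finite α] [DecidableEq α]
    {G : SimpleGraph α} (hG : G.Connected) (hcyc : G.IsCycles) {u v : α} (huv : G.Adj u v) :
    ∃ p : G.Walk u u, p.IsHamiltonianCycle := by
  obtain ⟨p, hp, hverts⟩ := hcyc.exists_cycle_toSubgraph_verts_eq_connectedComponentSupp
    (c := G.connectedComponentMk u) rfl ⟨v, huv⟩
  refine ⟨p, hp, hp.isPath_tail.isHamiltonian_of_mem fun w => ?_⟩
  have hw : w ∈ p.support := by
    rw [← Walk.mem_verts_toSubgraph, hverts, ConnectedComponent.mem_supp_iff,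
      ConnectedComponent.eq]
    exact hG.preconnected w u
  rw [Walk.support_tail_of_not_nil _ hp.not_nil]
  rcases p.mem_support_iff.1 hw with rfl | hw
  · exact Walk.end_mem_tail_support hp.not_nil
  · exact hw

variable [Fintype α] {G : SimpleGraph α} [DecidableRel G.Adj]

theorem isCycles_of_forall_degree_eq_two (h2 : ∀ v, G.degree v = 2) : G.IsCycles := by
  intro v _
  rw [Set.ncard_eq_toFinset_card']
  exact h2 v

theorem Connected.forall_degree_eq_two_iff (hG : G.Connected) :
    (∀ v, G.degree v = 2) ↔ ∃ m, 3 ≤ m ∧ Nonempty (G ≃g cycleGraph m) := by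
  classical
  refine ⟨fun h2 => ?_, fun ⟨m, hm, ⟨e⟩⟩ v =>
    (e.degree_eq v).symm.trans (cycleGraph_degree_eq_two hm (e v))⟩
  obtain ⟨u⟩ := hG.nonempty
  obtain ⟨v, huv⟩ := (G.degree_pos_iff_exists_adj u).1 (by rw [h2]; norm_num)
  obtain ⟨p, hp⟩ := hG.exists_isHamiltonianCycle_of_isCycles
    (isCycles_of_forall_degree_eq_two h2) huv
  have hcard : 3 ≤ Fintype.card α := hp.length_eq ▸ hp.isCycle.three_le_length
  obtain ⟨f⟩ := (cycleGraph_isContained_iff hcard).2 ⟨u, p, hp.isCycle, hp.length_eq⟩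
  refine ⟨_, hcard, ⟨(f.isoOfDegreeEq (Fintype.card_fin _) fun a => ?_).symm⟩⟩
  rw [h2, cycleGraph_degree_eq_two hcard]

theorem Connected.exists_isRegularOfDegree_iff (hG : G.Connected) :
    (∃ k, G.IsRegularOfDegree k) ↔ ∀ u v, G.Adj u v → G.degree u = G.degree v := by
  refine ⟨fun ⟨k, hk⟩ u v _ => (hk u).trans (hk v).symm, fun h => ?_⟩
  have hwalk : ∀ {u v} (_ : G.Walk u v), G.degree u = G.degree v := by
    intro u v p
    induction p with
    | nil => rfl
    | cons huv _ ih => exact (h _ _ huv).trans ih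
  obtain ⟨v⟩ := hG.nonempty
  exact ⟨G.degree v, fun u => hwalk (hG.preconnected u v).some⟩

theorem forall_adj_degree_eq_iff (hadj : ∀ v, ∃ w, G.Adj v w) (k : ℕ) :
    (∀ u v, G.Adj u v → G.degree u = k ∧ G.degree v = k) ↔ ∀ v, G.degree v = k := by
  refine ⟨fun h v => ?_, fun h u v _ => ⟨h u, h v⟩⟩
  obtain ⟨w, hvw⟩ := hadj v
  exact (h v w hvw).1

theorem degree_le_degree_add_sq
    (hΔδ : G.maxDegree - G.minDegree ≤ (2 * G.minDegree - 1) ^ 2) (u v : α) :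
    G.degree v ≤ G.degree u + (2 * G.degree u - 1) ^ 2 :=
  calc G.degree v ≤ G.maxDegree := G.degree_le_maxDegree v
    _ ≤ G.minDegree + (2 * G.minDegree - 1) ^ 2 := by omega
    _ ≤ G.degree u + (2 * G.degree u - 1) ^ 2 := by
      gcongr <;> exact G.minDegree_le_degree u

end SimpleGraph

variable (G : SimpleGraph V) [DecidableRel G.Adj]

theorem stmt8 (hG : G.Connected) (hδ : 2 ≤ G.minDegree)
    (hΔδ : G.maxDegree - G.minDegree ≤ (2 * G.minDegree - 1) ^ 2) :
    harmonicIndex G ≤ randicIndex G ∧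
    randicIndex G ≤ sumConnIndex G ∧
    sumConnIndex G < abcIndex G ∧
    abcIndex G < geoArithIndex G ∧
    (harmonicIndex G = randicIndex G ↔ ∃ k, G.IsRegularOfDegree k) ∧
    (randicIndex G = sumConnIndex G ↔
      ∃ m, 3 ≤ m ∧ Nonempty (G ≃g cycleGraph m)) := by
  have hdeg (v : V) : 2 ≤ G.degree v := hδ.trans (G.minDegree_le_degree v)
  have hdegR (v : V) : (2 : ℝ) ≤ G.degree v := by exact_mod_cast hdeg v
  have hpos (v : V) : (0 : ℝ) < G.degree v := by linarith [hdegR v]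
  have hbound (u v : V) : (G.degree v : ℝ) ≤ G.degree u + (2 * G.degree u - 1) ^ 2 := by
    have h := G.degree_le_degree_add_sq hΔδ u v
    rw [← Nat.cast_le (α := ℝ), Nat.cast_add, Nat.cast_pow,
      Nat.cast_sub (by linarith [hdeg u])] at h
    exact_mod_cast h
  have hadj (v : V) : ∃ w, G.Adj v w := (G.degree_pos_iff_exists_adj v).1 (by linarith [hdeg v])
  obtain ⟨u⟩ := hG.nonempty
  obtain ⟨v, huv⟩ := hadj u
  have hE : G.edgeFinset.Nonempty := ⟨s(u, v), G.mem_edgeFinset.2 huv⟩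
  refine ⟨G.sum_sym2Lift_le_sum_sym2Lift fun u v _ =>
      Real.two_div_add_le_one_div_sqrt_mul (hpos u) (hpos v),
    G.sum_sym2Lift_le_sum_sym2Lift fun u v _ =>
      Real.one_div_sqrt_mul_le_one_div_sqrt_add (hdegR u) (hdegR v),
    G.sum_sym2Lift_lt_sum_sym2Lift hE fun u v _ =>
      Real.one_div_sqrt_add_lt_sqrt_div (hdegR u) (hdegR v),
    G.sum_sym2Lift_lt_sum_sym2Lift hE fun u v _ =>
      Real.sqrt_div_lt_two_mul_sqrt_div (hdegR u) (hdegR v) (hbound u v) (hbound v u), ?_, ?_⟩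
  · rw [hG.exists_isRegularOfDegree_iff]
    refine (G.sum_sym2Lift_eq_sum_sym2Lift_iff fun u v _ =>
      Real.two_div_add_le_one_div_sqrt_mul (hpos u) (hpos v)).trans ?_
    exact forall₃_congr fun u v _ =>
      (Real.two_div_add_eq_one_div_sqrt_mul_iff (hpos u) (hpos v)).trans Nat.cast_inj
  · rw [← hG.forall_degree_eq_two_iff, ← G.forall_adj_degree_eq_iff hadj]
    refine (G.sum_sym2Lift_eq_sum_sym2Lift_iff fun u v _ =>
      Real.one_div_sqrt_mul_le_one_div_sqrt_add (hdegR u) (hdegR v)).trans ?_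
    exact forall₃_congr fun u v _ =>
      (Real.one_div_sqrt_mul_eq_one_div_sqrt_add_iff (hdegR u) (hdegR v)).trans (by norm_cast)
end

section
/- Let G be a connected simple graph of order n with minimum degree δ ≥ 2, and let χ(G) denote its chromatic number. Then χ(G) ≤ (2/δ) · GA(G), with equality if and only if G is isomorphic to the complete graph Kₙ. -/
open Finset SimpleGraph

variable {V : Type*} [Fintype V] [DecidableEq V]

/-!
The bound is the chain `χ(G) ≤ 2 H(G) ≤ 2 R(G) ≤ (2 / δ) GA(G)` through the harmonic index `H`
and the Randić index `R`.

For the first link, delete the edges at a vertex `v` of least positive degree: `H` does not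
increase, because the terms of the deleted edges pay for the growth of the terms of the other
edges at the neighbours of `v`. Iterate until no edge is left and let `k` be the largest of the
least positive degrees met. Colouring greedily in the reverse order uses at most `k + 1` colours,
and at the stage where `k` is attained every non-isolated vertex has degree at least `k`, which
forces `2 H ≥ k + 1` there, hence also for `G`.
The second link is AM-GM on each edge, the third is `δ (d_u + d_v) ≤ 2 d_u d_v`.

Equality in the last link forces `G` to be `δ`-regular; then `(2 / δ) GA(G) = n`, so `χ(G) = n`
and `G` is complete.
-/

theorem two_div_add_le_one_div_sqrt_mul {x y : ℝ} (hx : 0 < x) (hy : 0 < y) :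
    2 / (x + y) ≤ 1 / √(x * y) := by
  have hs : 0 < √(x * y) := by positivity
  rw [div_le_div_iff₀ (by positivity) hs, Real.sqrt_mul hx.le]
  nlinarith [sq_nonneg (√x - √y), Real.sq_sqrt hx.le, Real.sq_sqrt hy.le]

theorem mul_one_div_sqrt_mul_le {d x y : ℝ} (hd : 0 < d) (hx : d ≤ x) (hy : d ≤ y) :
    d * (1 / √(x * y)) ≤ 2 * √(x * y) / (x + y) := by
  have hx0 : 0 < x := hd.trans_le hx
  have hy0 : 0 < y := hd.trans_le hy
  have hs : 0 < √(x * y) := by positivity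
  rw [mul_one_div, div_le_div_iff₀ hs (by linarith), mul_assoc,
    Real.mul_self_sqrt (by positivity)]
  nlinarith

theorem mul_one_div_sqrt_mul_lt {d x y : ℝ} (hd : 0 < d) (hx : d < x) (hy : d ≤ y) :
    d * (1 / √(x * y)) < 2 * √(x * y) / (x + y) := by
  have hx0 : 0 < x := hd.trans hx
  have hy0 : 0 < y := hd.trans_le hy
  have hs : 0 < √(x * y) := by positivity
  rw [mul_one_div, div_lt_div_iff₀ hs (by linarith), mul_assoc,
    Real.mul_self_sqrt (by positivity)]
  nlinarith

theorem two_div_sub_le_two_div_add {s j : ℝ} (hj : 0 ≤ j) (hj2 : j ≤ 2) (hs : j + 2 ≤ s) :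
    2 / (s - j) ≤ 2 / s + j * (2 / ((s - 2) * s)) := by
  rcases hj.eq_or_lt with rfl | hj0
  · simp
  have hs2 : 0 < s - 2 := by linarith
  have hsj : 0 < s - j := by linarith
  have hs0 : 0 < s := by linarith
  calc 2 / (s - j) = 2 / s + j * (2 / ((s - j) * s)) := by field_simp; ring
    _ ≤ 2 / s + j * (2 / ((s - 2) * s)) := by gcongr

theorem sub_one_mul_two_div_le {x y : ℝ} (hx : 1 ≤ x) (hy : 1 ≤ y) :
    (x - 1) * (2 / ((x + y - 2) * (x + y))) ≤ 2 / (x + y) := by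
  rcases (show 0 ≤ x + y - 2 by linarith).eq_or_lt with h | h
  · rw [← h, zero_mul, div_zero, mul_zero]; exact div_nonneg zero_le_two (by linarith)
  rw [mul_div_assoc', div_le_div_iff₀ (by positivity) (by positivity)]
  nlinarith

namespace SimpleGraph

variable (A : SimpleGraph V) [DecidableRel A.Adj] {M : Type*} [AddCommMonoid M]

section

omit [DecidableEq V]

noncomputable def dartSum (f : V → V → M) : M :=
  ∑ u, ∑ w ∈ A.neighborFinset u, f u w

theorem dartSum_add (f g : V → V → M) :
    A.dartSum (fun u w => f u w + g u w) = A.dartSum f + A.dartSum g := by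
  simp only [dartSum, sum_add_distrib]

theorem dartSum_le_dartSum [PartialOrder M] [IsOrderedAddMonoid M] {f g : V → V → M}
    (h : ∀ u w, A.Adj u w → f u w ≤ g u w) : A.dartSum f ≤ A.dartSum g :=
  sum_le_sum fun u _ => sum_le_sum fun w hw => h u w ((A.mem_neighborFinset u w).1 hw)

end

theorem dartSum_eq_sum_darts (f : V → V → M) : A.dartSum f = ∑ d : A.Dart, f d.fst d.snd := by
  rw [dartSum, ← Finset.sum_fiberwise univ (fun d : A.Dart => d.fst)]
  refine sum_congr rfl fun u _ => ?_
  rw [dart_fst_fiber, sum_image fun _ _ _ _ h => A.dartOfNeighborSet_injective u h]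
  exact (sum_subtype _ (fun w => mem_neighborFinset A u w) (f u)).trans rfl

theorem dartSum_swap (f : V → V → M) : A.dartSum (fun u w => f w u) = A.dartSum f := by
  simp only [dartSum_eq_sum_darts]
  exact Fintype.sum_equiv (Dart.symm_involutive.toPerm _) _ _ fun _ => rfl

theorem two_nsmul_sum_edgeFinset (f : Sym2 V → M) :
    2 • ∑ e ∈ A.edgeFinset, f e = ∑ d : A.Dart, f d.edge := by
  rw [← sum_fiberwise_of_maps_to (g := Dart.edge) (t := A.edgeFinset)
    (fun d _ => mem_edgeFinset.2 d.edge_mem), smul_sum]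
  refine sum_congr rfl fun e he => ?_
  rw [sum_congr rfl fun d hd => congrArg f (mem_filter.1 hd).2, sum_const,
    dart_edge_fiber_card A e (mem_edgeFinset.1 he)]

theorem two_nsmul_sum_edgeFinset_lift (f : V → V → M) (hf : ∀ u w, f u w = f w u) :
    2 • ∑ e ∈ A.edgeFinset, Sym2.lift ⟨f, hf⟩ e = A.dartSum f := by
  rw [two_nsmul_sum_edgeFinset, dartSum_eq_sum_darts]
  rfl

theorem neighborFinset_deleteIncidenceSet_self (v : V) :
    (A.deleteIncidenceSet v).neighborFinset v = ∅ := by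
  ext; simp [deleteIncidenceSet_adj]

theorem neighborFinset_deleteIncidenceSet_of_ne {u v : V} (h : u ≠ v) :
    (A.deleteIncidenceSet v).neighborFinset u = (A.neighborFinset u).erase v := by
  ext; simp [deleteIncidenceSet_adj, h, and_comm]

theorem dartSum_eq_dartSum_deleteIncidenceSet_add (v : V) (f : V → V → M) :
    A.dartSum f = (A.deleteIncidenceSet v).dartSum f +
      ∑ w ∈ A.neighborFinset v, (f v w + f w v) := by
  have hsplit : ∀ u, ∑ w ∈ A.neighborFinset u, f u w =
      ∑ w ∈ (A.deleteIncidenceSet v).neighborFinset u, f u w +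
        ((if u = v then ∑ w ∈ A.neighborFinset v, f v w else 0) +
          if A.Adj v u then f u v else 0) := by
    intro u
    by_cases huv : u = v
    · subst huv
      simp [neighborFinset_deleteIncidenceSet_self]
    · rw [neighborFinset_deleteIncidenceSet_of_ne A huv, if_neg huv, zero_add]
      split_ifs with hvu
      · exact (sum_erase_add _ _ ((A.mem_neighborFinset u v).2 hvu.symm)).symm
      · rw [erase_eq_of_notMem fun h => hvu ((A.mem_neighborFinset u v).1 h).symm, add_zero]
  rw [dartSum, dartSum, sum_congr rfl fun u _ => hsplit u, sum_add_distrib, sum_add_distrib,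
    sum_ite_eq', if_pos (mem_univ v), ← sum_filter, ← neighborFinset_eq_filter,
    ← sum_add_distrib]

theorem degree_deleteIncidenceSet_add_ite {u v : V} (h : u ≠ v) :
    (A.deleteIncidenceSet v).degree u + (if A.Adj v u then 1 else 0) = A.degree u := by
  rw [← card_neighborFinset_eq_degree, ← card_neighborFinset_eq_degree,
    neighborFinset_deleteIncidenceSet_of_ne A h]
  split_ifs with hvu
  · exact card_erase_add_one ((A.mem_neighborFinset u v).2 hvu.symm)
  · rw [erase_eq_of_notMem fun h => hvu ((A.mem_neighborFinset u v).1 h).symm, add_zero]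

theorem cast_degree_deleteIncidenceSet_of_ne {u v : V} (h : u ≠ v) :
    ((A.deleteIncidenceSet v).degree u : ℝ) = A.degree u - if A.Adj v u then 1 else 0 := by
  rw [← A.degree_deleteIncidenceSet_add_ite h]
  split_ifs <;> push_cast <;> ring

variable {A} in
theorem Colorable.of_deleteIncidenceSet {v : V} {m : ℕ} (h : (A.deleteIncidenceSet v).Colorable m)
    (hv : A.degree v < m) : A.Colorable m := by
  obtain ⟨C⟩ := h
  obtain ⟨c, -, hc⟩ := exists_mem_notMem_of_card_lt_card (t := univ)
    (s := (A.neighborFinset v).image C) <| by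
      calc #((A.neighborFinset v).image C) ≤ A.degree v := card_image_le
        _ < #(univ : Finset (Fin m)) := by simpa using hv
  refine ⟨Coloring.mk (Function.update C v c) fun {x y} hxy => ?_⟩
  have hCv : ∀ z, A.Adj v z → C z ≠ c := fun z hz h =>
    hc (mem_image.2 ⟨z, (A.mem_neighborFinset v z).2 hz, h⟩)
  rcases eq_or_ne x v with rfl | hx
  · simpa [hxy.ne'] using (hCv y hxy).symm
  rcases eq_or_ne y v with rfl | hy
  · simpa [hx] using hCv x hxy.symm
  simpa [hx, hy] using C.valid (deleteIncidenceSet_adj.2 ⟨hxy, hx, hy⟩)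

theorem two_mul_harmonicIndex :
    2 * harmonicIndex A = A.dartSum fun u w => 2 / ((A.degree u : ℝ) + A.degree w) := by
  rw [← two_nsmul_sum_edgeFinset_lift A _ fun u w => by rw [add_comm], nsmul_eq_mul, Nat.cast_two]
  rfl

theorem two_div_add_degree_deleteIncidenceSet_le {u v w : V}
    (huw : (A.deleteIncidenceSet v).Adj u w) :
    2 / (((A.deleteIncidenceSet v).degree u : ℝ) + (A.deleteIncidenceSet v).degree w) ≤
      2 / ((A.degree u : ℝ) + A.degree w) +
        ((if A.Adj v u then 1 else 0) + (if A.Adj v w then 1 else 0)) *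
          (2 / (((A.degree u : ℝ) + A.degree w - 2) * (A.degree u + A.degree w))) := by
  obtain ⟨-, hu, hw⟩ := deleteIncidenceSet_adj.1 huw
  have hu1 : (1 : ℝ) ≤ (A.deleteIncidenceSet v).degree u :=
    Nat.one_le_cast.2 huw.degree_pos_left
  have hw1 : (1 : ℝ) ≤ (A.deleteIncidenceSet v).degree w :=
    Nat.one_le_cast.2 huw.degree_pos_right
  rw [A.cast_degree_deleteIncidenceSet_of_ne hu] at hu1
  rw [A.cast_degree_deleteIncidenceSet_of_ne hw] at hw1
  rw [A.cast_degree_deleteIncidenceSet_of_ne hu, A.cast_degree_deleteIncidenceSet_of_ne hw,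
    sub_add_sub_comm]
  apply two_div_sub_le_two_div_add <;> split_ifs at hu1 hw1 ⊢ <;> linarith

theorem sum_neighborFinset_deleteIncidenceSet_le {u v : V} (hvu : A.Adj v u)
    (hmin : ∀ x y, A.Adj x y → A.degree v ≤ A.degree x) :
    ∑ w ∈ (A.deleteIncidenceSet v).neighborFinset u,
        2 / (((A.degree u : ℝ) + A.degree w - 2) * (A.degree u + A.degree w)) ≤
      2 / ((A.degree u : ℝ) + A.degree v) := by
  have hdeg := A.cast_degree_deleteIncidenceSet_of_ne hvu.ne'
  rw [if_pos hvu] at hdeg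
  have hu1 : (1 : ℝ) ≤ A.degree u := Nat.one_le_cast.2 hvu.degree_pos_right
  have hv1 : (1 : ℝ) ≤ A.degree v := Nat.one_le_cast.2 hvu.degree_pos_left
  calc _ ≤ #((A.deleteIncidenceSet v).neighborFinset u) •
        (2 / (((A.degree u : ℝ) + A.degree v - 2) * (A.degree u + A.degree v))) := by
        refine sum_le_card_nsmul _ _ _ fun w hw => ?_
        have huw := ((A.deleteIncidenceSet v).mem_neighborFinset u w).1 hw
        have hu2 : (1 : ℝ) ≤ (A.deleteIncidenceSet v).degree u :=
          Nat.one_le_cast.2 huw.degree_pos_left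
        have hvw : (A.degree v : ℝ) ≤ A.degree w :=
          Nat.cast_le.2 (hmin w u (A.deleteIncidenceSet_le v huw).symm)
        gcongr
        · nlinarith
        · linarith
    _ = (A.degree u - 1) *
          (2 / (((A.degree u : ℝ) + A.degree v - 2) * (A.degree u + A.degree v))) := by
        rw [nsmul_eq_mul, card_neighborFinset_eq_degree, hdeg]
    _ ≤ _ := sub_one_mul_two_div_le hu1 hv1

theorem harmonicIndex_deleteIncidenceSet_le {v : V}
    (hmin : ∀ u w, A.Adj u w → A.degree v ≤ A.degree u) :
    harmonicIndex (A.deleteIncidenceSet v) ≤ harmonicIndex A := by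
  set B := A.deleteIncidenceSet v
  set h : V → V → ℝ := fun u w => 2 / ((A.degree u : ℝ) + A.degree w)
  set c : V → V → ℝ := fun u w =>
    2 / (((A.degree u : ℝ) + A.degree w - 2) * (A.degree u + A.degree w))
  -- `g u w` is the share of the growth of the term of `uw` that is charged to the endpoint `u`.
  set g : V → V → ℝ := fun u w => if A.Adj v u then c u w else 0
  have hpoint : ∀ u w, B.Adj u w →
      2 / ((B.degree u : ℝ) + B.degree w) ≤ h u w + (g u w + g w u) :=
    fun u w huw => (A.two_div_add_degree_deleteIncidenceSet_le huw).trans_eq <| by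
      simp only [h, g, c, add_comm (A.degree w : ℝ)]
      split_ifs <;> ring
  have hgain : B.dartSum g ≤ ∑ u ∈ A.neighborFinset v, h u v := by
    rw [dartSum, neighborFinset_eq_filter, sum_filter]
    refine sum_le_sum fun u _ => ?_
    simp only [g]
    split_ifs with hvu
    · exact A.sum_neighborFinset_deleteIncidenceSet_le hvu hmin
    · simp
  have hswap : B.dartSum (fun u w => g w u) = B.dartSum g := B.dartSum_swap g
  have hsymm : ∀ w, h v w = h w v := fun w => by simp only [h, add_comm]
  suffices 2 * harmonicIndex B ≤ 2 * harmonicIndex A by linarith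
  rw [two_mul_harmonicIndex, two_mul_harmonicIndex, A.dartSum_eq_dartSum_deleteIncidenceSet_add v]
  calc B.dartSum (fun u w => 2 / ((B.degree u : ℝ) + B.degree w))
      ≤ B.dartSum (fun u w => h u w + (g u w + g w u)) := B.dartSum_le_dartSum hpoint
    _ = B.dartSum h + 2 * B.dartSum g := by rw [dartSum_add, dartSum_add, hswap]; ring
    _ ≤ B.dartSum h + ∑ w ∈ A.neighborFinset v, (h v w + h w v) := by
        simp only [hsymm, ← two_mul, ← mul_sum]
        linarith

omit [DecidableEq V] in
theorem degree_lt_card_filter_degree_pos {u w : V} (huw : A.Adj u w) :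
    A.degree u < #{x | 0 < A.degree x} := by
  rw [← card_neighborFinset_eq_degree]
  refine card_lt_card ((ssubset_iff_of_subset fun x hx => ?_).2 ⟨u, ?_, ?_⟩)
  · exact mem_filter.2 ⟨mem_univ x, ((A.mem_neighborFinset u x).1 hx).degree_pos_right⟩
  · exact mem_filter.2 ⟨mem_univ u, huw.degree_pos_left⟩
  · exact A.notMem_neighborFinset_self u

theorem succ_le_two_mul_harmonicIndex {k : ℕ} (hk : 1 ≤ k) (hA : A ≠ ⊥)
    (hdeg : ∀ u w, A.Adj u w → k ≤ A.degree u) : (k + 1 : ℝ) ≤ 2 * harmonicIndex A := by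
  set t : Finset V := {x | 0 < A.degree x}
  set C : ℝ := #t - 1
  have hle : ∀ u w, A.Adj u w → (A.degree u : ℝ) ≤ C := fun u w huw => by
    rw [le_sub_iff_add_le]
    exact_mod_cast A.degree_lt_card_filter_degree_pos huw
  obtain ⟨u₀, w₀, huw₀⟩ := ne_bot_iff_exists_adj.1 hA
  have hkC : (k : ℝ) ≤ C := (Nat.cast_le.2 (hdeg u₀ w₀ huw₀)).trans (hle u₀ w₀ huw₀)
  have hk1 : (1 : ℝ) ≤ k := Nat.one_le_cast.2 hk
  have hvertex : ∀ u ∈ t, 2 * k / (k + C) ≤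
      ∑ w ∈ A.neighborFinset u, 2 / ((A.degree u : ℝ) + A.degree w) := by
    intro u hu
    obtain ⟨w, huw⟩ := (A.degree_pos_iff_exists_adj u).1 (mem_filter.1 hu).2
    have hku : (k : ℝ) ≤ A.degree u := Nat.cast_le.2 (hdeg u w huw)
    calc 2 * k / (k + C) ≤ A.degree u * (2 / (A.degree u + C)) := by
          rw [mul_div_assoc', div_le_div_iff₀ (by linarith) (by linarith)]
          nlinarith
      _ = ∑ w ∈ A.neighborFinset u, 2 / ((A.degree u : ℝ) + C) := by
          rw [sum_const, card_neighborFinset_eq_degree, nsmul_eq_mul]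
      _ ≤ _ := sum_le_sum fun w hw => by
          have := hle w u ((A.mem_neighborFinset u w).1 hw).symm
          gcongr
          linarith
  calc (k + 1 : ℝ) ≤ #t * (2 * k / (k + C)) := by
        rw [show (#t : ℝ) = C + 1 by ring, mul_div_assoc', le_div_iff₀ (by linarith)]
        nlinarith
    _ = ∑ u ∈ t, 2 * k / (k + C) := by rw [sum_const, nsmul_eq_mul]
    _ ≤ ∑ u ∈ t, ∑ w ∈ A.neighborFinset u, 2 / ((A.degree u : ℝ) + A.degree w) :=
        sum_le_sum hvertex
    _ ≤ A.dartSum fun u w => 2 / ((A.degree u : ℝ) + A.degree w) :=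
        sum_le_sum_of_subset_of_nonneg (subset_univ t) fun _ _ _ =>
          sum_nonneg fun _ _ => by positivity
    _ = 2 * harmonicIndex A := (two_mul_harmonicIndex A).symm

theorem exists_colorable_and_succ_le_two_mul_harmonicIndex :
    ∃ k : ℕ, A.Colorable (k + 1) ∧ (k = 0 ∨ (k + 1 : ℝ) ≤ 2 * harmonicIndex A) := by
  induction hm : #A.edgeFinset using Nat.strong_induction_on generalizing A with
  | _ m ih =>
  by_cases hA : A = ⊥
  · exact ⟨0, ⟨Coloring.mk (fun _ => 0) fun h => by simp [hA] at h⟩, Or.inl rfl⟩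
  obtain ⟨u₀, w₀, huw₀⟩ := ne_bot_iff_exists_adj.1 hA
  obtain ⟨v, hvt, hmin⟩ := exists_min_image ({x | 0 < A.degree x} : Finset V) (A.degree ·)
    ⟨u₀, mem_filter.2 ⟨mem_univ _, huw₀.degree_pos_left⟩⟩
  have hv : 0 < A.degree v := (mem_filter.1 hvt).2
  have hmin : ∀ u w, A.Adj u w → A.degree v ≤ A.degree u := fun u w huw =>
    hmin u (mem_filter.2 ⟨mem_univ u, huw.degree_pos_left⟩)
  have hlt : #(A.deleteIncidenceSet v).edgeFinset < m := by
    rw [card_edgeFinset_deleteIncidenceSet, ← hm]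
    have : 0 < #A.edgeFinset := card_pos.2 (edgeFinset_nonempty.2 hA)
    omega
  obtain ⟨k, hcol, hk⟩ := ih _ hlt (A.deleteIncidenceSet v) rfl
  rcases le_or_gt k (A.degree v) with hkv | hkv
  · exact ⟨A.degree v, (hcol.mono (by omega)).of_deleteIncidenceSet (by omega),
      Or.inr (A.succ_le_two_mul_harmonicIndex hv hA hmin)⟩
  · refine ⟨k, hcol.of_deleteIncidenceSet (by omega), hk.imp_right fun h => ?_⟩
    linarith [A.harmonicIndex_deleteIncidenceSet_le hmin]

theorem chromaticNumber_toNat_le_two_mul_harmonicIndex (hA : A ≠ ⊥) :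
    (A.chromaticNumber.toNat : ℝ) ≤ 2 * harmonicIndex A := by
  obtain ⟨k, hcol, hk⟩ := A.exists_colorable_and_succ_le_two_mul_harmonicIndex
  obtain ⟨u, w, huw⟩ := ne_bot_iff_exists_adj.1 hA
  have hk0 : k ≠ 0 := by
    rintro rfl
    exact absurd ((two_le_chromaticNumber_of_adj huw).trans hcol.chromaticNumber_le) (by decide)
  calc (A.chromaticNumber.toNat : ℝ) ≤ k + 1 := by
        exact_mod_cast ENat.toNat_le_of_le_natCast hcol.chromaticNumber_le
    _ ≤ 2 * harmonicIndex A := hk.resolve_left hk0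

section

omit [DecidableEq V]

theorem mul_sum_edgeFinset_lift_le {c : ℝ} {f g : V → V → ℝ} (hf : ∀ u w, f u w = f w u)
    (hg : ∀ u w, g u w = g w u) (h : ∀ u w, A.Adj u w → c * f u w ≤ g u w) :
    c * ∑ e ∈ A.edgeFinset, Sym2.lift ⟨f, hf⟩ e ≤
      ∑ e ∈ A.edgeFinset, Sym2.lift ⟨g, hg⟩ e := by
  rw [mul_sum]
  refine sum_le_sum fun e he => ?_
  induction e using Sym2.ind with
  | _ u w => exact h u w (mem_edgeFinset.1 he)

theorem mul_sum_edgeFinset_lift_lt {c : ℝ} {f g : V → V → ℝ} (hf : ∀ u w, f u w = f w u)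
    (hg : ∀ u w, g u w = g w u) (h : ∀ u w, A.Adj u w → c * f u w ≤ g u w) {u w : V}
    (huw : A.Adj u w) (hlt : c * f u w < g u w) :
    c * ∑ e ∈ A.edgeFinset, Sym2.lift ⟨f, hf⟩ e <
      ∑ e ∈ A.edgeFinset, Sym2.lift ⟨g, hg⟩ e := by
  rw [mul_sum]
  refine sum_lt_sum (fun e he => ?_) ⟨s(u, w), mem_edgeFinset.2 huw, hlt⟩
  induction e using Sym2.ind with
  | _ u w => exact h u w (mem_edgeFinset.1 he)

theorem harmonicIndex_le_randicIndex : harmonicIndex A ≤ randicIndex A := by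
  rw [← one_mul (harmonicIndex A)]
  exact A.mul_sum_edgeFinset_lift_le _ _ fun u w huw => by
    rw [one_mul]
    exact two_div_add_le_one_div_sqrt_mul (Nat.cast_pos.2 huw.degree_pos_left)
      (Nat.cast_pos.2 huw.degree_pos_right)

theorem nonempty_of_minDegree_pos (h : 0 < A.minDegree) : Nonempty V := by
  by_contra hV
  rw [not_nonempty_iff] at hV
  simp at h

theorem ne_bot_of_minDegree_pos (h : 0 < A.minDegree) : A ≠ ⊥ := by
  have := A.nonempty_of_minDegree_pos h
  obtain ⟨w, hw⟩ := (A.degree_pos_iff_exists_adj (Classical.arbitrary V)).1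
    (h.trans_le (A.minDegree_le_degree _))
  exact ne_bot_iff_exists_adj.2 ⟨_, w, hw⟩

theorem two_mul_randicIndex_le_two_div_minDegree_mul_geoArithIndex (hA : 0 < A.minDegree) :
    2 * randicIndex A ≤ 2 / (A.minDegree : ℝ) * geoArithIndex A := by
  have hδR : (A.minDegree : ℝ) * randicIndex A ≤ geoArithIndex A :=
    A.mul_sum_edgeFinset_lift_le _ _ fun u w _ => mul_one_div_sqrt_mul_le (Nat.cast_pos.2 hA)
      (Nat.cast_le.2 (A.minDegree_le_degree u)) (Nat.cast_le.2 (A.minDegree_le_degree w))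
  rw [div_mul_eq_mul_div, le_div_iff₀ (Nat.cast_pos.2 hA)]
  linarith

theorem isRegularOfDegree_minDegree_of_two_div_mul_geoArithIndex_le (hA : 0 < A.minDegree)
    (h : 2 / (A.minDegree : ℝ) * geoArithIndex A ≤ 2 * randicIndex A) :
    A.IsRegularOfDegree A.minDegree := fun u => by
  by_contra hne
  have hlt : A.minDegree < A.degree u := (A.minDegree_le_degree u).lt_of_ne' hne
  obtain ⟨w, huw⟩ := (A.degree_pos_iff_exists_adj u).1 (hA.trans hlt)
  have hδR : (A.minDegree : ℝ) * randicIndex A < geoArithIndex A := by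
    refine A.mul_sum_edgeFinset_lift_lt _ _ (fun u w _ => ?_) huw ?_
    · exact mul_one_div_sqrt_mul_le (Nat.cast_pos.2 hA)
        (Nat.cast_le.2 (A.minDegree_le_degree u)) (Nat.cast_le.2 (A.minDegree_le_degree w))
    · exact mul_one_div_sqrt_mul_lt (Nat.cast_pos.2 hA) (Nat.cast_lt.2 hlt)
        (Nat.cast_le.2 (A.minDegree_le_degree w))
  rw [div_mul_eq_mul_div, div_le_iff₀ (Nat.cast_pos.2 hA)] at h
  linarith

theorem geoArithIndex_of_isRegularOfDegree {d : ℕ} (h : A.IsRegularOfDegree d) :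
    geoArithIndex A = #A.edgeFinset := by
  rw [geoArithIndex, card_eq_sum_ones, Nat.cast_sum, Nat.cast_one]
  refine sum_congr rfl fun e he => ?_
  induction e using Sym2.ind with
  | _ u w =>
    have hd : (0 : ℝ) < d := by
      rw [← h.degree_eq u]
      exact Nat.cast_pos.2 (mem_edgeFinset.1 he).degree_pos_left
    simp only [Sym2.lift_mk, h.degree_eq, Real.sqrt_mul_self hd.le]
    field_simp
    ring

theorem two_div_mul_geoArithIndex_of_isRegularOfDegree {d : ℕ} (h : A.IsRegularOfDegree d)
    (hd : d ≠ 0) : 2 / (d : ℝ) * geoArithIndex A = Fintype.card V := by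
  have hsum := A.sum_degrees_eq_twice_card_edges
  simp only [h.degree_eq, sum_const, card_univ, smul_eq_mul] at hsum
  rw [A.geoArithIndex_of_isRegularOfDegree h, div_mul_eq_mul_div, div_eq_iff (by positivity)]
  exact_mod_cast hsum.symm

omit [DecidableRel A.Adj] in
theorem eq_top_of_chromaticNumber_toNat_eq_card
    (h : A.chromaticNumber.toNat = Fintype.card V) : A = ⊤ := by
  refine A.eq_top_of_chromaticNumber_eq_card ?_
  rw [← h, ENat.natCast_toNat
    (ne_top_of_le_ne_top (ENat.natCast_ne_top _) A.chromaticNumber_le_card)]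

end

end SimpleGraph

variable (G : SimpleGraph V) [DecidableRel G.Adj]

theorem stmt9 (n : ℕ) (hn : Fintype.card V = n)
    (hδ : 2 ≤ G.minDegree) :
    (G.chromaticNumber.toNat : ℝ) ≤ 2 / (G.minDegree : ℝ) * geoArithIndex G ∧
    ((G.chromaticNumber.toNat : ℝ) = 2 / (G.minDegree : ℝ) * geoArithIndex G ↔
      Nonempty (G ≃g completeGraph (Fin n))) := by
  have hδ0 : 0 < G.minDegree := by omega
  have hχR : (G.chromaticNumber.toNat : ℝ) ≤ 2 * randicIndex G :=
    (G.chromaticNumber_toNat_le_two_mul_harmonicIndex (G.ne_bot_of_minDegree_pos hδ0)).trans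
      (by linarith [G.harmonicIndex_le_randicIndex])
  refine ⟨hχR.trans (G.two_mul_randicIndex_le_two_div_minDegree_mul_geoArithIndex hδ0),
    fun heq => ?_, fun ⟨e⟩ => ?_⟩
  · have hreg := G.isRegularOfDegree_minDegree_of_two_div_mul_geoArithIndex_le hδ0 (heq ▸ hχR)
    rw [G.two_div_mul_geoArithIndex_of_isRegularOfDegree hreg hδ0.ne'] at heq
    rw [G.eq_top_of_chromaticNumber_toNat_eq_card (by exact_mod_cast heq)]
    exact ⟨Iso.completeGraph (Fintype.equivFinOfCardEq hn)⟩
  · have htop : G = ⊤ := by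
      ext u w
      rw [top_adj, ← e.map_adj_iff]
      exact e.injective.ne_iff
    subst htop
    have := nonempty_of_minDegree_pos _ hδ0
    have hreg : (⊤ : SimpleGraph V).IsRegularOfDegree (Fintype.card V - 1) := by
      convert IsRegularOfDegree.top (V := V)
    rw [hreg.minDegree_eq] at hδ ⊢
    rw [two_div_mul_geoArithIndex_of_isRegularOfDegree _ hreg (by omega), chromaticNumber_top]
    simp
end

section
/- Let G be a connected simple graph with n ≥ 2 vertices. Then M₂*(G) ≤ R(G) ≤ (n−1) · M₂*(G), with equality on the left if and only if G is isomorphic to the path P₂ (a single edge), and equality on the right if and only if G is isomorphic to the complete graph Kₙ. -/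
open Finset SimpleGraph

variable {V : Type*} [Fintype V] [DecidableEq V]

private lemma auxL1 {x : ℝ} (hx : 1 ≤ x) : 1 / x ≤ 1 / Real.sqrt x := by
  have h0 : (0:ℝ) < x := by linarith
  have hs : 1 ≤ Real.sqrt x := by
    rw [show (1:ℝ) = Real.sqrt 1 by simp]
    exact Real.sqrt_le_sqrt hx
  have hq : Real.sqrt x * Real.sqrt x = x := Real.mul_self_sqrt h0.le
  have : Real.sqrt x ≤ x := by nlinarith
  exact one_div_le_one_div_of_le (by linarith) this

private lemma auxL2 {x : ℝ} (hx : 1 ≤ x) (h : 1 / x = 1 / Real.sqrt x) : x = 1 := by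
  have h0 : (0:ℝ) < x := by linarith
  have hs : (0:ℝ) < Real.sqrt x := Real.sqrt_pos.mpr h0
  have hq : Real.sqrt x * Real.sqrt x = x := Real.mul_self_sqrt h0.le
  rw [div_eq_div_iff h0.ne' hs.ne'] at h
  nlinarith

private lemma auxR1 {x c : ℝ} (hx : 1 ≤ x) (hc : 1 ≤ c) (h2 : x ≤ c ^ 2) :
    1 / Real.sqrt x ≤ c * (1 / x) := by
  have h0 : (0:ℝ) < x := by linarith
  have hs : (0:ℝ) < Real.sqrt x := Real.sqrt_pos.mpr h0
  have hq : Real.sqrt x * Real.sqrt x = x := Real.mul_self_sqrt h0.le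
  have hsc : Real.sqrt x ≤ c := by
    calc Real.sqrt x ≤ Real.sqrt (c ^ 2) := Real.sqrt_le_sqrt h2
    _ = c := Real.sqrt_sq (by linarith)
  rw [mul_one_div, div_le_div_iff₀ hs h0]
  nlinarith

private lemma auxR2 {x c : ℝ} (hx : 1 ≤ x) (hc : 1 ≤ c)
    (h : 1 / Real.sqrt x = c * (1 / x)) : x = c ^ 2 := by
  have h0 : (0:ℝ) < x := by linarith
  have hs : (0:ℝ) < Real.sqrt x := Real.sqrt_pos.mpr h0
  have hq : Real.sqrt x * Real.sqrt x = x := Real.mul_self_sqrt h0.le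
  rw [mul_one_div, div_eq_div_iff hs.ne' h0.ne'] at h
  have h' : Real.sqrt x * Real.sqrt x = c * Real.sqrt x := by nlinarith
  have : Real.sqrt x = c := mul_right_cancel₀ hs.ne' h'
  nlinarith

omit [DecidableEq V] in
private lemma degPos (G : SimpleGraph V) [DecidableRel G.Adj] (hG : G.Connected)
    (hc : 1 < Fintype.card V) (v : V) : 0 < G.degree v := by
  obtain ⟨w, hw⟩ := Fintype.exists_ne_of_one_lt_card hc v
  rw [G.degree_pos_iff_exists_adj]
  obtain ⟨p⟩ := hG.preconnected v w
  cases p with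
  | nil => exact absurd rfl hw
  | cons h _ => exact ⟨_, h⟩

variable (G : SimpleGraph V) [DecidableRel G.Adj]

theorem stmt10 (hG : G.Connected) (n : ℕ) (hn : Fintype.card V = n) (hn2 : 2 ≤ n) :
    modSecondZagrebIndex G ≤ randicIndex G ∧
    randicIndex G ≤ ((n : ℝ) - 1) * modSecondZagrebIndex G ∧
    (modSecondZagrebIndex G = randicIndex G ↔ Nonempty (G ≃g pathGraph 2)) ∧
    (randicIndex G = ((n : ℝ) - 1) * modSecondZagrebIndex G ↔
      Nonempty (G ≃g completeGraph (Fin n))) := by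
  classical
  have hc : 1 < Fintype.card V := by omega
  have hr1 : ∀ v : V, (1:ℝ) ≤ (G.degree v : ℝ) := by
    intro v
    exact_mod_cast degPos G hG hc v
  have hdlt : ∀ v : V, (G.degree v : ℝ) ≤ (n:ℝ) - 1 := by
    intro v
    have h1 := G.degree_lt_card_verts v
    rw [hn] at h1
    have h2 : (G.degree v : ℝ) + 1 ≤ (n:ℝ) := by exact_mod_cast h1
    linarith
  have hc1 : (1:ℝ) ≤ (n:ℝ) - 1 := by
    have : (2:ℝ) ≤ (n:ℝ) := by exact_mod_cast hn2
    linarith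
  have hx1 : ∀ u v : V, (1:ℝ) ≤ (G.degree u : ℝ) * (G.degree v : ℝ) := by
    intro u v; nlinarith [hr1 u, hr1 v]
  have hx2 : ∀ u v : V, (G.degree u : ℝ) * (G.degree v : ℝ) ≤ ((n:ℝ) - 1) ^ 2 := by
    intro u v; nlinarith [hdlt u, hdlt v, hr1 u, hr1 v]
  unfold modSecondZagrebIndex randicIndex
  have key1 : ∀ e ∈ G.edgeFinset,
      Sym2.lift ⟨fun u v => 1 / ((G.degree u : ℝ) * (G.degree v : ℝ)),
        fun u v => by dsimp only; rw [mul_comm ((G.degree u : ℝ)) ((G.degree v : ℝ))]⟩ e ≤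
      Sym2.lift ⟨fun u v => 1 / Real.sqrt ((G.degree u : ℝ) * (G.degree v : ℝ)),
        fun u v => by dsimp only; rw [mul_comm ((G.degree u : ℝ)) ((G.degree v : ℝ))]⟩ e := by
    intro e
    induction e using Sym2.ind with
    | _ u v =>
      intro _
      simp only [Sym2.lift_mk]
      exact auxL1 (hx1 u v)
  have key2 : ∀ e ∈ G.edgeFinset,
      Sym2.lift ⟨fun u v => 1 / Real.sqrt ((G.degree u : ℝ) * (G.degree v : ℝ)),
        fun u v => by dsimp only; rw [mul_comm ((G.degree u : ℝ)) ((G.degree v : ℝ))]⟩ e ≤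
      ((n:ℝ) - 1) * Sym2.lift ⟨fun u v => 1 / ((G.degree u : ℝ) * (G.degree v : ℝ)),
        fun u v => by dsimp only; rw [mul_comm ((G.degree u : ℝ)) ((G.degree v : ℝ))]⟩ e := by
    intro e
    induction e using Sym2.ind with
    | _ u v =>
      intro _
      simp only [Sym2.lift_mk]
      exact auxR1 (hx1 u v) hc1 (hx2 u v)
  obtain ⟨v0⟩ : Nonempty V := Fintype.card_pos_iff.mp (by omega)
  obtain ⟨w0, hvw0⟩ := (G.degree_pos_iff_exists_adj v0).mp (degPos G hG hc v0)
  refine ⟨Finset.sum_le_sum key1, ?_, ?_, ?_⟩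
  · rw [Finset.mul_sum]
    exact Finset.sum_le_sum key2
  · rw [Finset.sum_eq_sum_iff_of_le key1]
    constructor
    · intro hall
      -- every vertex has degree 1
      have hd1 : ∀ v : V, G.degree v = 1 := by
        intro v
        obtain ⟨w, hw⟩ := (G.degree_pos_iff_exists_adj v).mp (degPos G hG hc v)
        have he : s(v, w) ∈ G.edgeFinset := by
          rw [mem_edgeFinset, mem_edgeSet]; exact hw
        have h := hall _ he
        simp only [Sym2.lift_mk] at h
        have hprod : (G.degree v : ℝ) * (G.degree w : ℝ) = 1 := auxL2 (hx1 v w) h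
        have hnat : G.degree v * G.degree w = 1 := by exact_mod_cast hprod
        exact Nat.eq_one_of_mul_eq_one_right hnat
      -- unique neighbors
      have hnb : ∀ x y z : V, G.Adj x y → G.Adj x z → y = z := by
        intro x y z hy hz
        have hcard : (G.neighborFinset x).card ≤ 1 := le_of_eq (hd1 x)
        exact Finset.card_le_one.mp hcard y ((G.mem_neighborFinset x y).mpr hy)
          z ((G.mem_neighborFinset x z).mpr hz)
      have hstep : ∀ x y : V, G.Adj x y → (x = v0 ∨ x = w0) → (y = v0 ∨ y = w0) := by
        intro x y hxy hx
        rcases hx with rfl | rfl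
        · right; exact hnb _ y _ hxy hvw0
        · left; exact hnb _ y _ hxy hvw0.symm
      have hwalk : ∀ ⦃a b : V⦄, G.Walk a b → (a = v0 ∨ a = w0) → (b = v0 ∨ b = w0) := by
        intro a b p
        induction p with
        | nil => exact id
        | cons h p ih => intro ha; exact ih (hstep _ _ h ha)
      have hall2 : ∀ x : V, x = v0 ∨ x = w0 := by
        intro x
        obtain ⟨p⟩ := hG.preconnected v0 x
        exact hwalk p (Or.inl rfl)
      have hne : v0 ≠ w0 := hvw0.ne
      have huniv : (Finset.univ : Finset V) = {v0, w0} := by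
        ext x
        simp only [Finset.mem_univ, Finset.mem_insert, Finset.mem_singleton, true_iff]
        exact hall2 x
      have hcard2 : Fintype.card V = 2 := by
        rw [← Finset.card_univ, huniv, Finset.card_insert_of_notMem (by simpa using hne),
          Finset.card_singleton]
      have hGtop : G = ⊤ := by
        ext x y
        simp only [top_adj]
        constructor
        · exact Adj.ne
        · intro hxy
          rcases hall2 x with rfl | rfl <;> rcases hall2 y with rfl | rfl
          · exact absurd rfl hxy
          · exact hvw0
          · exact hvw0.symm
          · exact absurd rfl hxy
      rw [hGtop, pathGraph_two_eq_top]
      exact ⟨Iso.completeGraph (Fintype.equivFinOfCardEq hcard2)⟩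
    · rintro ⟨φ⟩
      rw [pathGraph_two_eq_top] at φ
      have hadj : ∀ x y : V, G.Adj x y ↔ x ≠ y := by
        intro x y
        rw [← φ.map_adj_iff]
        simp [top_adj]
      have hcardV : Fintype.card V = 2 := by
        rw [Fintype.card_congr φ.toEquiv, Fintype.card_fin]
      have hdeg : ∀ v : V, G.degree v = 1 := by
        intro v
        have hnbr : G.neighborFinset v = Finset.univ.erase v := by
          ext w
          simp only [mem_neighborFinset, Finset.mem_erase, Finset.mem_univ, and_true, hadj]
          exact ⟨Ne.symm, Ne.symm⟩
        have : G.degree v = (Finset.univ.erase v).card := by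
          rw [← hnbr]; rfl
        rw [this, Finset.card_erase_of_mem (Finset.mem_univ v), Finset.card_univ, hcardV]
      intro e he
      revert he
      induction e using Sym2.ind with
      | _ u v =>
        intro _
        simp only [Sym2.lift_mk, hdeg]
        norm_num
  · rw [Finset.mul_sum, Finset.sum_eq_sum_iff_of_le key2]
    constructor
    · intro hall
      have hdn : ∀ v : V, G.degree v = n - 1 := by
        intro v
        obtain ⟨w, hw⟩ := (G.degree_pos_iff_exists_adj v).mp (degPos G hG hc v)
        have he : s(v, w) ∈ G.edgeFinset := by
          rw [mem_edgeFinset, mem_edgeSet]; exact hw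
        have h := hall _ he
        simp only [Sym2.lift_mk] at h
        have hsq : (G.degree v : ℝ) * (G.degree w : ℝ) = ((n:ℝ) - 1) ^ 2 :=
          auxR2 (hx1 v w) hc1 h
        have hac : (G.degree v : ℝ) = (n:ℝ) - 1 := by
          nlinarith [hdlt v, hdlt w, hr1 v, hr1 w]
        have : (G.degree v : ℝ) = ((n - 1 : ℕ) : ℝ) := by
          rw [Nat.cast_sub (by omega)]
          push_cast
          linarith
        exact_mod_cast this
      have hadj : ∀ x y : V, x ≠ y → G.Adj x y := by
        intro x y hxy
        have hsub : G.neighborFinset x ⊆ Finset.univ.erase x := by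
          intro w hw
          rw [Finset.mem_erase]
          exact ⟨((G.mem_neighborFinset x w).mp hw).ne', Finset.mem_univ w⟩
        have heq : G.neighborFinset x = Finset.univ.erase x := by
          apply Finset.eq_of_subset_of_card_le hsub
          rw [Finset.card_erase_of_mem (Finset.mem_univ x), Finset.card_univ, hn]
          have : (G.neighborFinset x).card = G.degree x := rfl
          rw [this, hdn x]
        have : y ∈ G.neighborFinset x := by
          rw [heq, Finset.mem_erase]
          exact ⟨hxy.symm, Finset.mem_univ y⟩
        exact (G.mem_neighborFinset x y).mp this
      have hGtop : G = ⊤ := by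
        ext x y
        simp only [top_adj]
        exact ⟨Adj.ne, hadj x y⟩
      rw [hGtop, ← completeGraph_eq_top, completeGraph_eq_top]
      exact ⟨Iso.completeGraph (Fintype.equivFinOfCardEq hn)⟩
    · rintro ⟨φ⟩
      rw [completeGraph_eq_top] at φ
      have hadj : ∀ x y : V, G.Adj x y ↔ x ≠ y := by
        intro x y
        rw [← φ.map_adj_iff]
        simp [top_adj]
      have hdeg : ∀ v : V, G.degree v = n - 1 := by
        intro v
        have hnbr : G.neighborFinset v = Finset.univ.erase v := by
          ext w
          simp only [mem_neighborFinset, Finset.mem_erase, Finset.mem_univ, and_true, hadj]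
          exact ⟨Ne.symm, Ne.symm⟩
        have : G.degree v = (Finset.univ.erase v).card := by
          rw [← hnbr]; rfl
        rw [this, Finset.card_erase_of_mem (Finset.mem_univ v), Finset.card_univ, hn]
      have hcast : ∀ v : V, (G.degree v : ℝ) = (n:ℝ) - 1 := by
        intro v
        rw [hdeg v, Nat.cast_sub (by omega)]
        norm_num
      intro e he
      revert he
      induction e using Sym2.ind with
      | _ u v =>
        intro _
        simp only [Sym2.lift_mk, hcast]
        have h0 : (0:ℝ) < (n:ℝ) - 1 := by linarith
        rw [Real.sqrt_mul_self h0.le]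
        field_simp
end

section
/- Let G be a connected simple graph with n ≥ 2 vertices. Then M₂*(G)/√2 ≤ X(G) ≤ ((n−1)^(3/2)/√2) · M₂*(G), with equality on the left if and only if G is isomorphic to the path P₂ (a single edge), and equality on the right if and only if G is isomorphic to the complete graph Kₙ. -/
open Finset SimpleGraph

variable {V : Type*} [Fintype V] [DecidableEq V]

section realLemmas

lemma bridgeL' {a b : ℝ} (ha : 1 ≤ a) (hb : 1 ≤ b) :
    (1/(a*b)/Real.sqrt 2 = 1/Real.sqrt (a+b)) ↔ a + b = 2*(a*b)^2 := by
  have hab : 0 < a*b := by positivity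
  have hsab : 0 < Real.sqrt (a+b) := Real.sqrt_pos.2 (by linarith)
  rw [div_div, div_eq_div_iff (by positivity) hsab.ne', one_mul, one_mul]
  have key : a*b*Real.sqrt 2 = Real.sqrt (2*(a*b)^2) := by
    rw [Real.sqrt_mul (by norm_num : (0:ℝ) ≤ 2), Real.sqrt_sq hab.le]; ring
  rw [key, Real.sqrt_inj (by linarith) (by positivity)]

lemma polyL' {a b : ℝ} (ha : 1 ≤ a) (hb : 1 ≤ b) :
    a + b ≤ 2*(a*b)^2 := by
  nlinarith [mul_nonneg (sub_nonneg.2 ha) (sub_nonneg.2 hb),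
    mul_nonneg (mul_nonneg (by positivity : (0:ℝ) ≤ a*b) (by nlinarith : (0:ℝ) ≤ a*b - 1)) (by norm_num : (0:ℝ) ≤ 2),
    mul_nonneg (by linarith : (0:ℝ) ≤ a) (sub_nonneg.2 hb),
    mul_nonneg (by linarith : (0:ℝ) ≤ b) (sub_nonneg.2 ha)]

lemma polyL_eq' {a b : ℝ} (ha : 1 ≤ a) (hb : 1 ≤ b) (h : a + b = 2*(a*b)^2) :
    a = 1 ∧ b = 1 := by
  have h1 : 0 ≤ 2*(a*b)*(a*b-1) := by nlinarith
  have h2 : 0 ≤ a*(b-1) := by nlinarith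
  have h3 : 0 ≤ b*(a-1) := by nlinarith
  have hsum : 2*(a*b)*(a*b-1) + a*(b-1) + b*(a-1) = 0 := by nlinarith
  constructor
  · nlinarith
  · nlinarith

lemma termL_le' {a b : ℝ} (ha : 1 ≤ a) (hb : 1 ≤ b) :
    1/(a*b)/Real.sqrt 2 ≤ 1/Real.sqrt (a+b) := by
  have hab : 0 < a*b := by positivity
  have hsab : 0 < Real.sqrt (a+b) := Real.sqrt_pos.2 (by linarith)
  rw [div_div, div_le_div_iff₀ (by positivity) hsab, one_mul, one_mul]
  have key : a*b*Real.sqrt 2 = Real.sqrt (2*(a*b)^2) := by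
    rw [Real.sqrt_mul (by norm_num : (0:ℝ) ≤ 2), Real.sqrt_sq hab.le]; ring
  rw [key]
  exact Real.sqrt_le_sqrt (polyL' ha hb)

lemma termL_eq' {a b : ℝ} (ha : 1 ≤ a) (hb : 1 ≤ b) :
    (1/(a*b)/Real.sqrt 2 = 1/Real.sqrt (a+b)) ↔ (a = 1 ∧ b = 1) := by
  rw [bridgeL' ha hb]
  constructor
  · exact polyL_eq' ha hb
  · rintro ⟨rfl, rfl⟩; norm_num

lemma c32' {c : ℝ} (hc : 0 ≤ c) : c ^ ((3:ℝ)/2) = Real.sqrt (c^3) := by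
  rw [Real.sqrt_eq_rpow, ← Real.rpow_natCast c 3, ← Real.rpow_mul hc]
  norm_num

lemma bridgeR' {a b c : ℝ} (ha : 1 ≤ a) (hb : 1 ≤ b) (hc : 1 ≤ c) :
    (1/Real.sqrt (a+b) = c ^ ((3:ℝ)/2)/Real.sqrt 2 * (1/(a*b))) ↔
      2*(a*b)^2 = c^3*(a+b) := by
  have hab : 0 < a*b := by positivity
  have hsab : 0 < Real.sqrt (a+b) := Real.sqrt_pos.2 (by linarith)
  have hc0 : 0 ≤ c := by linarith
  rw [c32' hc0, div_mul_div_comm, mul_one,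
    div_eq_div_iff hsab.ne' (by positivity), one_mul]
  have k1 : Real.sqrt 2 * (a*b) = Real.sqrt (2*(a*b)^2) := by
    rw [Real.sqrt_mul (by norm_num : (0:ℝ) ≤ 2), Real.sqrt_sq hab.le]
  have k2 : Real.sqrt (c^3) * Real.sqrt (a+b) = Real.sqrt (c^3*(a+b)) := by
    rw [← Real.sqrt_mul (by positivity)]
  rw [k1, k2, Real.sqrt_inj (by positivity) (by positivity)]

lemma polyR' {a b c : ℝ} (ha : 1 ≤ a) (hb : 1 ≤ b) (hac : a ≤ c) (hbc : b ≤ c) :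
    2*(a*b)^2 ≤ c^3*(a+b) := by
  have hab : 0 < a*b := by positivity
  have h1 : a*b ≤ c*b := by nlinarith
  have h2 : a*b ≤ c*a := by nlinarith
  have h3 : (a*b)*(a*b) ≤ (c*c)*(a*b) := by nlinarith
  have h4 : 2*(a*b) ≤ c*(a+b) := by linarith
  have h5 : (c*c)*(2*(a*b)) ≤ (c*c)*(c*(a+b)) :=
    mul_le_mul_of_nonneg_left h4 (mul_self_nonneg c)
  nlinarith

lemma polyR_eq' {a b c : ℝ} (ha : 1 ≤ a) (hb : 1 ≤ b) (hac : a ≤ c) (hbc : b ≤ c)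
    (h : 2*(a*b)^2 = c^3*(a+b)) : a = c ∧ b = c := by
  have hab : 0 < a*b := by positivity
  have hc0 : 0 < c := by linarith
  have h1 : a*b ≤ c*b := by nlinarith
  have h2 : a*b ≤ c*a := by nlinarith
  have h3 : (a*b)*(a*b) ≤ (c*c)*(a*b) := by nlinarith
  have h4 : 2*(a*b) ≤ c*(a+b) := by linarith
  have h5 : (c*c)*(2*(a*b)) ≤ (c*c)*(c*(a+b)) :=
    mul_le_mul_of_nonneg_left h4 (mul_self_nonneg c)
  have e3 : (a*b)*(a*b) = (c*c)*(a*b) := by nlinarith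
  have habc : a*b = c*c := mul_right_cancel₀ (ne_of_gt hab) e3
  have hsum : a + b = 2*c := by
    have h6 : c^3*(a+b) = c^3*(2*c) := by nlinarith
    have hc3 : (0:ℝ) < c^3 := by positivity
    exact mul_left_cancel₀ (ne_of_gt hc3) h6
  have hdiff : (a-b)^2 = 0 := by nlinarith
  have hab2 : a = b := by
    have := sq_eq_zero_iff.mp hdiff
    linarith
  constructor <;> nlinarith

lemma termR_le' {a b c : ℝ} (ha : 1 ≤ a) (hb : 1 ≤ b) (hac : a ≤ c) (hbc : b ≤ c) :
    1/Real.sqrt (a+b) ≤ c ^ ((3:ℝ)/2)/Real.sqrt 2 * (1/(a*b)) := by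
  have hc : 1 ≤ c := le_trans ha hac
  have hab : 0 < a*b := by positivity
  have hsab : 0 < Real.sqrt (a+b) := Real.sqrt_pos.2 (by linarith)
  rw [c32' (by linarith), div_mul_div_comm, mul_one,
    div_le_div_iff₀ hsab (by positivity), one_mul]
  have k1 : Real.sqrt 2 * (a*b) = Real.sqrt (2*(a*b)^2) := by
    rw [Real.sqrt_mul (by norm_num : (0:ℝ) ≤ 2), Real.sqrt_sq hab.le]
  have k2 : Real.sqrt (c^3) * Real.sqrt (a+b) = Real.sqrt (c^3*(a+b)) := by
    rw [← Real.sqrt_mul (by positivity)]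
  rw [k1, k2]
  exact Real.sqrt_le_sqrt (polyR' ha hb hac hbc)

lemma termR_eq' {a b c : ℝ} (ha : 1 ≤ a) (hb : 1 ≤ b) (hac : a ≤ c) (hbc : b ≤ c) :
    (1/Real.sqrt (a+b) = c ^ ((3:ℝ)/2)/Real.sqrt 2 * (1/(a*b))) ↔ (a = c ∧ b = c) := by
  have hc : 1 ≤ c := le_trans ha hac
  rw [bridgeR' ha hb hc]
  constructor
  · exact polyR_eq' ha hb hac hbc
  · rintro ⟨rfl, rfl⟩; ring

end realLemmas

section graphHelpers

lemma walk_closed' {W : Type*} (G : SimpleGraph W) (s : Set W)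
    (hs : ∀ a ∈ s, ∀ b, G.Adj a b → b ∈ s) :
    ∀ {u w : W}, G.Walk u w → u ∈ s → w ∈ s := by
  intro u w p
  induction p with
  | nil => exact id
  | cons h _ ih => exact fun hu => ih (hs _ hu _ h)

lemma iso_complete_of' {W : Type*} [Fintype W] (G : SimpleGraph W) {m : ℕ}
    (hcard : Fintype.card W = m) (h : ∀ a b : W, G.Adj a b ↔ a ≠ b) :
    Nonempty (G ≃g completeGraph (Fin m)) := by
  refine ⟨⟨Fintype.equivFinOfCardEq hcard, ?_⟩⟩
  intro a b
  simp only [completeGraph, top_adj, ne_eq, EmbeddingLike.apply_eq_iff_eq]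
  rw [h a b, ne_eq]

lemma complete_of_iso' {W : Type*} (G : SimpleGraph W) {m : ℕ}
    (f : G ≃g completeGraph (Fin m)) :
    ∀ a b : W, G.Adj a b ↔ a ≠ b := by
  intro a b
  rw [← f.map_rel_iff]
  simp only [completeGraph, top_adj, ne_eq, EmbeddingLike.apply_eq_iff_eq]

/-- Auxiliary: the summand of the sum-connectivity index. -/
noncomputable def fX (G : SimpleGraph V) [DecidableRel G.Adj] (e : Sym2 V) : ℝ :=
  Sym2.lift
    ⟨fun u v => 1 / Real.sqrt ((G.degree u : ℝ) + (G.degree v : ℝ)),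
     fun u v => by dsimp only; rw [add_comm ((G.degree u : ℝ)) ((G.degree v : ℝ))]⟩ e

/-- Auxiliary: the summand of the modified second Zagreb index. -/
noncomputable def fM (G : SimpleGraph V) [DecidableRel G.Adj] (e : Sym2 V) : ℝ :=
  Sym2.lift
    ⟨fun u v => 1 / ((G.degree u : ℝ) * (G.degree v : ℝ)),
     fun u v => by dsimp only; rw [mul_comm ((G.degree u : ℝ)) ((G.degree v : ℝ))]⟩ e

lemma sumConn_eq' (G : SimpleGraph V) [DecidableRel G.Adj] :
    sumConnIndex G = ∑ e ∈ G.edgeFinset, fX G e := rfl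

lemma modZ_eq' (G : SimpleGraph V) [DecidableRel G.Adj] :
    modSecondZagrebIndex G = ∑ e ∈ G.edgeFinset, fM G e := rfl

lemma fX_mk' (G : SimpleGraph V) [DecidableRel G.Adj] (u v : V) :
    fX G s(u, v) = 1 / Real.sqrt ((G.degree u : ℝ) + (G.degree v : ℝ)) := rfl

lemma fM_mk' (G : SimpleGraph V) [DecidableRel G.Adj] (u v : V) :
    fM G s(u, v) = 1 / ((G.degree u : ℝ) * (G.degree v : ℝ)) := rfl

end graphHelpers

variable (G : SimpleGraph V) [DecidableRel G.Adj]

theorem stmt11 (hG : G.Connected) (n : ℕ) (hn : Fintype.card V = n) (hn2 : 2 ≤ n) :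
    modSecondZagrebIndex G / Real.sqrt 2 ≤ sumConnIndex G ∧
    sumConnIndex G ≤ ((n : ℝ) - 1) ^ ((3 : ℝ) / 2) / Real.sqrt 2 * modSecondZagrebIndex G ∧
    (modSecondZagrebIndex G / Real.sqrt 2 = sumConnIndex G ↔
      Nonempty (G ≃g pathGraph 2)) ∧
    (sumConnIndex G = ((n : ℝ) - 1) ^ ((3 : ℝ) / 2) / Real.sqrt 2 * modSecondZagrebIndex G ↔
      Nonempty (G ≃g completeGraph (Fin n))) := by
  classical
  have hcardV : 2 ≤ Fintype.card V := by rw [hn]; exact hn2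
  have hadj : ∀ v : V, ∃ w, G.Adj v w := by
    intro v
    obtain ⟨w, hw⟩ := Fintype.exists_ne_of_one_lt_card (by omega) v
    obtain ⟨p⟩ := hG.preconnected v w
    cases p with
    | nil => exact absurd rfl hw
    | cons h _ => exact ⟨_, h⟩
  have hd1 : ∀ v : V, 1 ≤ (G.degree v : ℝ) := by
    intro v
    have := (G.degree_pos_iff_exists_adj v).2 (hadj v)
    exact_mod_cast this
  have hdn : ∀ v : V, (G.degree v : ℝ) ≤ (n : ℝ) - 1 := by
    intro v
    have h := G.degree_lt_card_verts v
    rw [hn] at h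
    have h' : (G.degree v : ℝ) + 1 ≤ (n : ℝ) := by exact_mod_cast h
    linarith
  have hML : modSecondZagrebIndex G / Real.sqrt 2
      = ∑ e ∈ G.edgeFinset, fM G e / Real.sqrt 2 := by
    rw [modZ_eq', Finset.sum_div]
  have hMR : ((n : ℝ) - 1) ^ ((3:ℝ)/2) / Real.sqrt 2 * modSecondZagrebIndex G
      = ∑ e ∈ G.edgeFinset, ((n : ℝ) - 1) ^ ((3:ℝ)/2) / Real.sqrt 2 * fM G e := by
    rw [modZ_eq', Finset.mul_sum]
  have hleL : ∀ e ∈ G.edgeFinset, fM G e / Real.sqrt 2 ≤ fX G e := by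
    intro e _
    induction e using Sym2.ind with
    | _ u v =>
      rw [fM_mk', fX_mk']
      exact termL_le' (hd1 u) (hd1 v)
  have hleR : ∀ e ∈ G.edgeFinset,
      fX G e ≤ ((n : ℝ) - 1) ^ ((3:ℝ)/2) / Real.sqrt 2 * fM G e := by
    intro e _
    induction e using Sym2.ind with
    | _ u v =>
      rw [fM_mk', fX_mk']
      exact termR_le' (hd1 u) (hd1 v) (hdn u) (hdn v)
  refine ⟨by rw [hML, sumConn_eq']; exact Finset.sum_le_sum hleL,
          by rw [hMR, sumConn_eq']; exact Finset.sum_le_sum hleR, ?_, ?_⟩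
  · -- left equality iff P₂
    rw [hML, sumConn_eq', Finset.sum_eq_sum_iff_of_le hleL]
    constructor
    · intro h
      obtain ⟨x⟩ : Nonempty V := Fintype.card_pos_iff.mp (by omega)
      obtain ⟨y, hxy⟩ := hadj x
      have hdeg : ∀ u v : V, G.Adj u v → G.degree u = 1 := by
        intro u v huv
        have he : s(u, v) ∈ G.edgeFinset := by
          rw [mem_edgeFinset]; exact huv
        have h' := h _ he
        rw [fM_mk', fX_mk'] at h'
        have h1 := ((termL_eq' (hd1 u) (hd1 v)).mp h').1
        exact_mod_cast h1
      have hnbr : ∀ u v : V, G.Adj u v → G.neighborFinset u = {v} := by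
        intro u v huv
        refine (Finset.eq_of_subset_of_card_le ?_ ?_).symm
        · simp [Finset.singleton_subset_iff, mem_neighborFinset, huv]
        · rw [card_neighborFinset_eq_degree, hdeg u v huv, Finset.card_singleton]
      have hcl : ∀ a ∈ ({x, y} : Set V), ∀ b, G.Adj a b → b ∈ ({x, y} : Set V) := by
        rintro a (rfl | rfl) b hab
        · have hb : b ∈ G.neighborFinset a := (mem_neighborFinset G a b).2 hab
          rw [hnbr a y hxy] at hb
          right; exact Finset.mem_singleton.mp hb
        · have hb : b ∈ G.neighborFinset a := (mem_neighborFinset G a b).2 hab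
          rw [hnbr a x hxy.symm] at hb
          left; exact Finset.mem_singleton.mp hb
      have huniv : ∀ w : V, w = x ∨ w = y := by
        intro w
        have hr := hG.preconnected x w
        obtain ⟨p⟩ := hr
        have := walk_closed' G ({x, y} : Set V) hcl p (Or.inl rfl)
        simpa using this
      have hiff : ∀ a b : V, G.Adj a b ↔ a ≠ b := by
        intro a b
        constructor
        · exact fun hab => hab.ne
        · intro hab
          rcases huniv a with rfl | rfl <;> rcases huniv b with rfl | rfl
          · exact absurd rfl hab
          · exact hxy
          · exact hxy.symm
          · exact absurd rfl hab
      have hcard2 : Fintype.card V = 2 := by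
        have huniv' : (Finset.univ : Finset V) = {x, y} := by
          ext w
          simp only [Finset.mem_univ, true_iff, Finset.mem_insert, Finset.mem_singleton]
          exact huniv w
        rw [← Finset.card_univ, huniv',
          Finset.card_insert_of_notMem (by simp [hxy.ne]), Finset.card_singleton]
      obtain ⟨i⟩ := iso_complete_of' G hcard2 hiff
      have i' : G ≃g (⊤ : SimpleGraph (Fin 2)) := i
      rw [← pathGraph_two_eq_top] at i'
      exact ⟨i'⟩
    · rintro ⟨f⟩
      have hcard2 : Fintype.card V = 2 := by
        rw [← Fintype.card_fin 2]; exact Fintype.card_congr f.toEquiv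
      have hdeg : ∀ v : V, G.degree v = 1 := by
        intro v
        have h1 : 0 < G.degree v := (G.degree_pos_iff_exists_adj v).2 (hadj v)
        have h2 := G.degree_lt_card_verts v
        rw [hcard2] at h2
        omega
      intro e _
      induction e using Sym2.ind with
      | _ u v =>
        rw [fM_mk', fX_mk']
        exact (termL_eq' (hd1 u) (hd1 v)).mpr
          ⟨by rw [hdeg u]; norm_num, by rw [hdeg v]; norm_num⟩
  · -- right equality iff Kₙ
    rw [hMR, sumConn_eq', Finset.sum_eq_sum_iff_of_le hleR]
    constructor
    · intro h
      have hdeg : ∀ v : V, G.degree v = n - 1 := by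
        intro v
        obtain ⟨w, hw⟩ := hadj v
        have he : s(v, w) ∈ G.edgeFinset := by
          rw [mem_edgeFinset]; exact hw
        have h' := h _ he
        rw [fM_mk', fX_mk'] at h'
        have h1 := ((termR_eq' (hd1 v) (hd1 w) (hdn v) (hdn w)).mp h').1
        have h2 : (G.degree v : ℝ) + 1 = (n : ℝ) := by linarith
        have h3 : G.degree v + 1 = n := by exact_mod_cast h2
        omega
      have hiff : ∀ a b : V, G.Adj a b ↔ a ≠ b := by
        intro a b
        constructor
        · exact fun hab => hab.ne
        · intro hab
          have hsub : G.neighborFinset a ⊆ Finset.univ.erase a := by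
            intro z hz
            rw [mem_neighborFinset] at hz
            exact Finset.mem_erase.2 ⟨hz.ne', Finset.mem_univ z⟩
          have hcards : (Finset.univ.erase a).card ≤ (G.neighborFinset a).card := by
            rw [Finset.card_erase_of_mem (Finset.mem_univ a), Finset.card_univ, hn,
              card_neighborFinset_eq_degree, hdeg a]
          have heq := Finset.eq_of_subset_of_card_le hsub hcards
          have hb : b ∈ G.neighborFinset a := by
            rw [heq]
            exact Finset.mem_erase.2 ⟨Ne.symm hab, Finset.mem_univ b⟩
          exact (mem_neighborFinset G a b).1 hb
      exact iso_complete_of' G hn hiff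
    · rintro ⟨f⟩
      have hiff := complete_of_iso' G f
      have hdeg : ∀ v : V, (G.degree v : ℝ) = (n : ℝ) - 1 := by
        intro v
        have hNv : G.neighborFinset v = Finset.univ.erase v := by
          ext w
          rw [mem_neighborFinset, Finset.mem_erase, hiff]
          constructor
          · exact fun hvw => ⟨hvw.symm, Finset.mem_univ w⟩
          · exact fun hw => hw.1.symm
        have hdv : G.degree v = n - 1 := by
          rw [← card_neighborFinset_eq_degree, hNv,
            Finset.card_erase_of_mem (Finset.mem_univ v), Finset.card_univ, hn]
        rw [hdv]
        have : ((n - 1 : ℕ) : ℝ) = (n : ℝ) - 1 := by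
          have : 1 ≤ n := by omega
          push_cast [this]
          ring
        rw [this]
      intro e _
      induction e using Sym2.ind with
      | _ u v =>
        rw [fM_mk', fX_mk']
        exact (termR_eq' (hd1 u) (hd1 v) (hdn u) (hdn v)).mpr ⟨hdeg u, hdeg v⟩
end
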